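/- arXiv:0807.1229 — 10 statements merged into one kernel-verified Lean document; each statement's English description precedes it below -/
import Mathlib

section
/- For every positive integer g and every permutation σ of {1,…,g}, one has inv(σ) − 2(A_σ + A_{σ⁻¹}) ≥ (g − fix(σ))/2; equivalently, 2·inv(σ) ≥ 4·(A_σ + A_{σ⁻¹}) + g − fix(σ). -/
set_option maxHeartbeats 2000000

open Finset

/-- The number of inversions of a permutation of `{1,…,g}` (modeled on `Fin g`):
pairs `(i,j)` with `i < j` and `σ i > σ j`. -/
def invCount (g : ℕ) (σ : Equiv.Perm (Fin g)) : ℕ :=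
  ((Finset.univ : Finset (Fin g × Fin g)).filter
    (fun p => p.1 < p.2 ∧ σ p.2 < σ p.1)).card

/-- `A_σ`: the number of pairs `(i,j)` with `i < j < σ(j) < σ(i)`. -/
def ACount (g : ℕ) (σ : Equiv.Perm (Fin g)) : ℕ :=
  ((Finset.univ : Finset (Fin g × Fin g)).filter
    (fun p => p.1 < p.2 ∧ p.2 < σ p.2 ∧ σ p.2 < σ p.1)).card

/-- `fix(σ)`: the number of fixed points of `σ`. -/
def fixCount (g : ℕ) (σ : Equiv.Perm (Fin g)) : ℕ :=
  ((Finset.univ : Finset (Fin g)).filter (fun i => σ i = i)).card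

/-- auxiliary count: pairs `(i,j)` with `i < j`, `σ j < σ i < i`. -/
def A2Count (g : ℕ) (σ : Equiv.Perm (Fin g)) : ℕ :=
  ((Finset.univ : Finset (Fin g × Fin g)).filter
    (fun p => p.1 < p.2 ∧ σ p.2 < σ p.1 ∧ σ p.1 < p.1)).card

lemma ACount_inv_eq (g : ℕ) (σ : Equiv.Perm (Fin g)) : ACount g σ⁻¹ = A2Count g σ := by
  unfold ACount A2Count
  apply Finset.card_nbij' (fun p => (σ⁻¹ p.2, σ⁻¹ p.1)) (fun p => (σ p.2, σ p.1))
  · intro p hp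
    simp only [Finset.mem_coe, mem_filter, mem_univ, true_and] at *
    refine ⟨hp.2.2, ?_, ?_⟩ <;> simp [Equiv.Perm.inv_def, Equiv.apply_symm_apply] <;> tauto
  · intro p hp
    simp only [Finset.mem_coe, mem_filter, mem_univ, true_and] at *
    refine ⟨hp.2.1, ?_, ?_⟩ <;> simp [Equiv.Perm.inv_def, Equiv.symm_apply_apply] <;> tauto
  · intro p _; simp
  · intro p _; simp

lemma inv_cast (g : ℕ) (σ : Equiv.Perm (Fin g)) :
    (invCount g σ : ℤ) = ∑ i : Fin g, ∑ j : Fin g,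
      (if i < j ∧ σ j < σ i then (1:ℤ) else 0) := by
  rw [invCount, Finset.card_filter]
  push_cast
  rw [Fintype.sum_prod_type]

lemma AA_cast (g : ℕ) (σ : Equiv.Perm (Fin g)) :
    (ACount g σ : ℤ) + (A2Count g σ : ℤ) = ∑ i : Fin g, ∑ j : Fin g,
      ((if i < j ∧ j < σ j ∧ σ j < σ i then (1:ℤ) else 0)
        + (if i < j ∧ σ j < σ i ∧ σ i < i then (1:ℤ) else 0)) := by
  rw [ACount, A2Count, Finset.card_filter, Finset.card_filter]
  push_cast
  rw [Fintype.sum_prod_type, Fintype.sum_prod_type, ← Finset.sum_add_distrib]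
  exact Finset.sum_congr rfl fun i _ => (Finset.sum_add_distrib).symm

section Step

variable {g : ℕ} (σ : Equiv.Perm (Fin g)) (m a : Fin g)

lemma inv_step (hma : m < a) (hm : m < σ m) (hσa : σ a = m)
    (hlow : ∀ k, k < m → σ k = k) :
    (invCount g σ : ℤ) = invCount g (σ * Equiv.swap m a) + 1 +
      2 * ∑ k : Fin g, (if m < k ∧ k < a ∧ σ k < σ m then (1:ℤ) else 0) := by
  set τ := σ * Equiv.swap m a with hτdef
  have hτm : τ m = m := by
    rw [hτdef]; simp [Equiv.Perm.mul_apply, hσa]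
  have hτa : τ a = σ m := by
    rw [hτdef]; simp [Equiv.Perm.mul_apply]
  have hτo : ∀ j : Fin g, j ≠ m → j ≠ a → τ j = σ j := by
    intro j h1 h2
    rw [hτdef]; simp [Equiv.Perm.mul_apply, Equiv.swap_apply_of_ne_of_ne h1 h2]
  have hfix : ∀ q : Fin g, (m ≤ q ∧ m ≤ σ q) ∨ (σ q = q ∧ q < m) := by
    intro q
    rcases le_or_gt m q with h | h
    · refine Or.inl ⟨h, ?_⟩
      rcases le_or_gt m (σ q) with h' | h'
      · exact h'
      · have h2 : σ q = q := σ.injective (hlow (σ q) h')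
        exact absurd (h.trans_lt (h2 ▸ h')) (lt_irrefl _)
    · exact Or.inr ⟨hlow q h, h⟩
  have hnea : ∀ q : Fin g, q ≠ a → σ q ≠ m := fun q hq h =>
    hq (σ.injective (h.trans hσa.symm))
  have hnem : ∀ q : Fin g, q ≠ m → σ q ≠ σ m := fun q hq h => hq (σ.injective h)
  -- the difference as a double sum
  have hdiff : (invCount g σ : ℤ) - invCount g τ = ∑ i : Fin g, ∑ j : Fin g,
      ((if i < j ∧ σ j < σ i then (1:ℤ) else 0) - (if i < j ∧ τ j < τ i then (1:ℤ) else 0)) := by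
    rw [inv_cast, inv_cast, ← Finset.sum_sub_distrib]
    refine Finset.sum_congr rfl fun i _ => ?_
    rw [← Finset.sum_sub_distrib]
  -- row computation
  have hrow : ∀ j : Fin g,
      (((if m < j ∧ σ j < σ m then (1:ℤ) else 0) - (if m < j ∧ τ j < τ m then (1:ℤ) else 0))
        + ((if a < j ∧ σ j < σ a then (1:ℤ) else 0) - (if a < j ∧ τ j < τ a then (1:ℤ) else 0)))
      = (if j = a then (1:ℤ) else 0) + (if m < j ∧ j < a ∧ σ j < σ m then (1:ℤ) else 0) := by
    intro j
    rw [hτm, hτa, hσa]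
    by_cases hja : j = a
    · subst hja
      rw [hτa, hσa]
      split_ifs <;> omega
    · by_cases hjm : j = m
      · subst hjm
        rw [hτm]
        split_ifs <;> omega
      · rw [hτo j hjm hja]
        have h1 := hfix j
        have h2 := hnea j hja
        have h3 := hnem j hjm
        rcases h1 with h1 | ⟨h1, h1'⟩
        · split_ifs <;> omega
        · rw [h1]
          split_ifs <;> omega
  -- column computation
  have hcol : ∀ i : Fin g, i ≠ m → i ≠ a →
      (∑ j : Fin g, ((if i < j ∧ σ j < σ i then (1:ℤ) else 0)
          - (if i < j ∧ τ j < τ i then (1:ℤ) else 0)))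
        = (if m < i ∧ i < a ∧ σ i < σ m then (1:ℤ) else 0) := by
    intro i him hia
    have hvan : ∀ j ∈ (univ : Finset (Fin g)), j ∉ ({m, a} : Finset (Fin g)) →
        ((if i < j ∧ σ j < σ i then (1:ℤ) else 0)
          - (if i < j ∧ τ j < τ i then (1:ℤ) else 0)) = 0 := by
      intro j _ hj
      simp only [mem_insert, mem_singleton, not_or] at hj
      rw [hτo j hj.1 hj.2, hτo i him hia, sub_self]
    rw [← Finset.sum_subset (Finset.subset_univ ({m, a} : Finset (Fin g))) hvan]
    rw [Finset.sum_pair (ne_of_lt hma)]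
    rw [hτm, hτa, hσa, hτo i him hia]
    have h1 := hfix i
    have h2 := hnea i hia
    have h3 := hnem i him
    rcases h1 with h1 | ⟨h1, h1'⟩
    · split_ifs <;> omega
    · rw [h1]
      split_ifs <;> omega
  -- assemble
  have hsplit : (∑ i : Fin g, ∑ j : Fin g,
      ((if i < j ∧ σ j < σ i then (1:ℤ) else 0) - (if i < j ∧ τ j < τ i then (1:ℤ) else 0)))
      = (∑ j : Fin g, (((if m < j ∧ σ j < σ m then (1:ℤ) else 0) - (if m < j ∧ τ j < τ m then (1:ℤ) else 0))
          + ((if a < j ∧ σ j < σ a then (1:ℤ) else 0) - (if a < j ∧ τ j < τ a then (1:ℤ) else 0))))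
        + ∑ i ∈ (univ.erase m).erase a, ∑ j : Fin g,
            ((if i < j ∧ σ j < σ i then (1:ℤ) else 0) - (if i < j ∧ τ j < τ i then (1:ℤ) else 0)) := by
    rw [← Finset.add_sum_erase (univ : Finset (Fin g)) _ (mem_univ m)]
    rw [← Finset.add_sum_erase (univ.erase m) _
      (Finset.mem_erase.mpr ⟨(ne_of_lt hma).symm, mem_univ a⟩)]
    rw [Finset.sum_add_distrib]
    ring
  rw [hsplit] at hdiff
  have hrowsum : (∑ j : Fin g, (((if m < j ∧ σ j < σ m then (1:ℤ) else 0) - (if m < j ∧ τ j < τ m then (1:ℤ) else 0))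
          + ((if a < j ∧ σ j < σ a then (1:ℤ) else 0) - (if a < j ∧ τ j < τ a then (1:ℤ) else 0))))
      = 1 + ∑ k : Fin g, (if m < k ∧ k < a ∧ σ k < σ m then (1:ℤ) else 0) := by
    rw [Finset.sum_congr rfl (fun j _ => hrow j), Finset.sum_add_distrib]
    congr 1
    rw [Finset.sum_ite_eq' (univ : Finset (Fin g)) a (fun _ => (1:ℤ))]
    simp
  have hcolsum : (∑ i ∈ (univ.erase m).erase a, ∑ j : Fin g,
        ((if i < j ∧ σ j < σ i then (1:ℤ) else 0) - (if i < j ∧ τ j < τ i then (1:ℤ) else 0)))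
      = ∑ k : Fin g, (if m < k ∧ k < a ∧ σ k < σ m then (1:ℤ) else 0) := by
    rw [Finset.sum_congr rfl (fun i hi => hcol i
      (Finset.ne_of_mem_erase (Finset.mem_of_mem_erase hi)) (Finset.ne_of_mem_erase hi))]
    apply Finset.sum_subset (Finset.subset_univ _)
    intro x _ hx
    simp only [Finset.mem_erase, mem_univ, and_true, not_and, not_not] at hx
    by_cases h1 : x = a
    · subst h1; split_ifs <;> omega
    · have h2 : x = m := hx h1
      subst h2; split_ifs <;> omega
  rw [hrowsum, hcolsum] at hdiff
  linarith

lemma A_step (hma : m < a) (hm : m < σ m) (hσa : σ a = m)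
    (hlow : ∀ k, k < m → σ k = k) :
    (ACount g σ : ℤ) + A2Count g σ ≤ (ACount g (σ * Equiv.swap m a) : ℤ)
      + A2Count g (σ * Equiv.swap m a)
      + ∑ k : Fin g, (if m < k ∧ k < a ∧ σ k < σ m then (1:ℤ) else 0) := by
  set τ := σ * Equiv.swap m a with hτdef
  have hτm : τ m = m := by
    rw [hτdef]; simp [Equiv.Perm.mul_apply, hσa]
  have hτa : τ a = σ m := by
    rw [hτdef]; simp [Equiv.Perm.mul_apply]
  have hτo : ∀ j : Fin g, j ≠ m → j ≠ a → τ j = σ j := by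
    intro j h1 h2
    rw [hτdef]; simp [Equiv.Perm.mul_apply, Equiv.swap_apply_of_ne_of_ne h1 h2]
  have hfix : ∀ q : Fin g, (m ≤ q ∧ m ≤ σ q) ∨ (σ q = q ∧ q < m) := by
    intro q
    rcases le_or_gt m q with h | h
    · refine Or.inl ⟨h, ?_⟩
      rcases le_or_gt m (σ q) with h' | h'
      · exact h'
      · have h2 : σ q = q := σ.injective (hlow (σ q) h')
        exact absurd (h.trans_lt (h2 ▸ h')) (lt_irrefl _)
    · exact Or.inr ⟨hlow q h, h⟩
  have hnea : ∀ q : Fin g, q ≠ a → σ q ≠ m := fun q hq h =>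
    hq (σ.injective (h.trans hσa.symm))
  have hnem : ∀ q : Fin g, q ≠ m → σ q ≠ σ m := fun q hq h => hq (σ.injective h)
  have hdiff : ((ACount g σ : ℤ) + A2Count g σ) - ((ACount g τ : ℤ) + A2Count g τ)
      = ∑ i : Fin g, ∑ j : Fin g,
        (((if i < j ∧ j < σ j ∧ σ j < σ i then (1:ℤ) else 0)
            + (if i < j ∧ σ j < σ i ∧ σ i < i then (1:ℤ) else 0))
          - ((if i < j ∧ j < τ j ∧ τ j < τ i then (1:ℤ) else 0)
            + (if i < j ∧ τ j < τ i ∧ τ i < i then (1:ℤ) else 0))) := by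
    rw [AA_cast, AA_cast, ← Finset.sum_sub_distrib]
    refine Finset.sum_congr rfl fun i _ => ?_
    rw [← Finset.sum_sub_distrib]
  have hrow : ∀ j : Fin g,
      ((((if m < j ∧ j < σ j ∧ σ j < σ m then (1:ℤ) else 0)
            + (if m < j ∧ σ j < σ m ∧ σ m < m then (1:ℤ) else 0))
          - ((if m < j ∧ j < τ j ∧ τ j < τ m then (1:ℤ) else 0)
            + (if m < j ∧ τ j < τ m ∧ τ m < m then (1:ℤ) else 0)))
        + (((if a < j ∧ j < σ j ∧ σ j < σ a then (1:ℤ) else 0)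
            + (if a < j ∧ σ j < σ a ∧ σ a < a then (1:ℤ) else 0))
          - ((if a < j ∧ j < τ j ∧ τ j < τ a then (1:ℤ) else 0)
            + (if a < j ∧ τ j < τ a ∧ τ a < a then (1:ℤ) else 0))))
      ≤ (if m < j ∧ j < a ∧ j < σ j ∧ σ j < σ m then (1:ℤ) else 0) := by
    intro j
    rw [hτm, hτa, hσa]
    by_cases hja : j = a
    · subst hja
      rw [hτa, hσa]
      split_ifs <;> omega
    · by_cases hjm : j = m
      · subst hjm
        rw [hτm]
        split_ifs <;> omega
      · rw [hτo j hjm hja]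
        have h2 := hnea j hja
        have h3 := hnem j hjm
        rcases hfix j with ⟨h0, h1⟩ | ⟨h1, h1'⟩
        · split_ifs <;> omega
        · rw [h1]
          split_ifs <;> omega
  have hcol : ∀ i : Fin g, i ≠ m → i ≠ a →
      (∑ j : Fin g,
        (((if i < j ∧ j < σ j ∧ σ j < σ i then (1:ℤ) else 0)
            + (if i < j ∧ σ j < σ i ∧ σ i < i then (1:ℤ) else 0))
          - ((if i < j ∧ j < τ j ∧ τ j < τ i then (1:ℤ) else 0)
            + (if i < j ∧ τ j < τ i ∧ τ i < i then (1:ℤ) else 0))))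
      ≤ (if m < i ∧ i < a ∧ σ i < i ∧ σ i < σ m then (1:ℤ) else 0) := by
    intro i him hia
    have hvan : ∀ j ∈ (univ : Finset (Fin g)), j ∉ ({m, a} : Finset (Fin g)) →
        (((if i < j ∧ j < σ j ∧ σ j < σ i then (1:ℤ) else 0)
            + (if i < j ∧ σ j < σ i ∧ σ i < i then (1:ℤ) else 0))
          - ((if i < j ∧ j < τ j ∧ τ j < τ i then (1:ℤ) else 0)
            + (if i < j ∧ τ j < τ i ∧ τ i < i then (1:ℤ) else 0))) = 0 := by
      intro j _ hj
      simp only [mem_insert, mem_singleton, not_or] at hj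
      rw [hτo j hj.1 hj.2, hτo i him hia, sub_self]
    rw [← Finset.sum_subset (Finset.subset_univ ({m, a} : Finset (Fin g))) hvan]
    rw [Finset.sum_pair (ne_of_lt hma)]
    rw [hτm, hτa, hσa, hτo i him hia]
    have h2 := hnea i hia
    have h3 := hnem i him
    rcases hfix i with ⟨h0, h1⟩ | ⟨h1, h1'⟩
    · split_ifs <;> omega
    · rw [h1]
      split_ifs <;> omega
  have hsplit : (∑ i : Fin g, ∑ j : Fin g,
        (((if i < j ∧ j < σ j ∧ σ j < σ i then (1:ℤ) else 0)
            + (if i < j ∧ σ j < σ i ∧ σ i < i then (1:ℤ) else 0))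
          - ((if i < j ∧ j < τ j ∧ τ j < τ i then (1:ℤ) else 0)
            + (if i < j ∧ τ j < τ i ∧ τ i < i then (1:ℤ) else 0))))
      = (∑ j : Fin g,
          ((((if m < j ∧ j < σ j ∧ σ j < σ m then (1:ℤ) else 0)
            + (if m < j ∧ σ j < σ m ∧ σ m < m then (1:ℤ) else 0))
          - ((if m < j ∧ j < τ j ∧ τ j < τ m then (1:ℤ) else 0)
            + (if m < j ∧ τ j < τ m ∧ τ m < m then (1:ℤ) else 0)))
        + (((if a < j ∧ j < σ j ∧ σ j < σ a then (1:ℤ) else 0)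
            + (if a < j ∧ σ j < σ a ∧ σ a < a then (1:ℤ) else 0))
          - ((if a < j ∧ j < τ j ∧ τ j < τ a then (1:ℤ) else 0)
            + (if a < j ∧ τ j < τ a ∧ τ a < a then (1:ℤ) else 0)))))
        + ∑ i ∈ (univ.erase m).erase a, ∑ j : Fin g,
            (((if i < j ∧ j < σ j ∧ σ j < σ i then (1:ℤ) else 0)
            + (if i < j ∧ σ j < σ i ∧ σ i < i then (1:ℤ) else 0))
          - ((if i < j ∧ j < τ j ∧ τ j < τ i then (1:ℤ) else 0)
            + (if i < j ∧ τ j < τ i ∧ τ i < i then (1:ℤ) else 0))) := by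
    rw [← Finset.add_sum_erase (univ : Finset (Fin g)) _ (mem_univ m)]
    rw [← Finset.add_sum_erase (univ.erase m) _
      (Finset.mem_erase.mpr ⟨(ne_of_lt hma).symm, mem_univ a⟩)]
    rw [Finset.sum_add_distrib]
    ring
  have h4 : (∑ j : Fin g,
          ((((if m < j ∧ j < σ j ∧ σ j < σ m then (1:ℤ) else 0)
            + (if m < j ∧ σ j < σ m ∧ σ m < m then (1:ℤ) else 0))
          - ((if m < j ∧ j < τ j ∧ τ j < τ m then (1:ℤ) else 0)
            + (if m < j ∧ τ j < τ m ∧ τ m < m then (1:ℤ) else 0)))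
        + (((if a < j ∧ j < σ j ∧ σ j < σ a then (1:ℤ) else 0)
            + (if a < j ∧ σ j < σ a ∧ σ a < a then (1:ℤ) else 0))
          - ((if a < j ∧ j < τ j ∧ τ j < τ a then (1:ℤ) else 0)
            + (if a < j ∧ τ j < τ a ∧ τ a < a then (1:ℤ) else 0)))))
      ≤ ∑ j : Fin g, (if m < j ∧ j < a ∧ j < σ j ∧ σ j < σ m then (1:ℤ) else 0) :=
    Finset.sum_le_sum fun j _ => hrow j
  have h5 : (∑ i ∈ (univ.erase m).erase a, ∑ j : Fin g,
            (((if i < j ∧ j < σ j ∧ σ j < σ i then (1:ℤ) else 0)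
            + (if i < j ∧ σ j < σ i ∧ σ i < i then (1:ℤ) else 0))
          - ((if i < j ∧ j < τ j ∧ τ j < τ i then (1:ℤ) else 0)
            + (if i < j ∧ τ j < τ i ∧ τ i < i then (1:ℤ) else 0))))
      ≤ ∑ i ∈ (univ.erase m).erase a, (if m < i ∧ i < a ∧ σ i < i ∧ σ i < σ m then (1:ℤ) else 0) :=
    Finset.sum_le_sum fun i hi => hcol i
      (Finset.ne_of_mem_erase (Finset.mem_of_mem_erase hi)) (Finset.ne_of_mem_erase hi)
  have h6 : (∑ i ∈ (univ.erase m).erase a, (if m < i ∧ i < a ∧ σ i < i ∧ σ i < σ m then (1:ℤ) else 0))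
      ≤ ∑ i : Fin g, (if m < i ∧ i < a ∧ σ i < i ∧ σ i < σ m then (1:ℤ) else 0) :=
    Finset.sum_le_sum_of_subset_of_nonneg (Finset.subset_univ _)
      (fun i _ _ => by split_ifs <;> norm_num)
  have h7 : (∑ k : Fin g, ((if m < k ∧ k < a ∧ k < σ k ∧ σ k < σ m then (1:ℤ) else 0)
        + (if m < k ∧ k < a ∧ σ k < k ∧ σ k < σ m then (1:ℤ) else 0)))
      ≤ ∑ k : Fin g, (if m < k ∧ k < a ∧ σ k < σ m then (1:ℤ) else 0) :=
    Finset.sum_le_sum fun k _ => by split_ifs <;> omega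
  have h8 : (∑ j : Fin g, (if m < j ∧ j < a ∧ j < σ j ∧ σ j < σ m then (1:ℤ) else 0))
        + (∑ i : Fin g, (if m < i ∧ i < a ∧ σ i < i ∧ σ i < σ m then (1:ℤ) else 0))
      = ∑ k : Fin g, ((if m < k ∧ k < a ∧ k < σ k ∧ σ k < σ m then (1:ℤ) else 0)
        + (if m < k ∧ k < a ∧ σ k < k ∧ σ k < σ m then (1:ℤ) else 0)) :=
    (Finset.sum_add_distrib).symm
  rw [hsplit] at hdiff
  linarith

lemma fix_step (hσa : σ a = m) :
    fixCount g (σ * Equiv.swap m a) ≤ fixCount g σ + 2 := by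
  have hτo : ∀ j : Fin g, j ≠ m → j ≠ a → (σ * Equiv.swap m a) j = σ j := by
    intro j h1 h2
    simp [Equiv.Perm.mul_apply, Equiv.swap_apply_of_ne_of_ne h1 h2]
  have hsub : ((univ : Finset (Fin g)).filter fun i => (σ * Equiv.swap m a) i = i)
      ⊆ insert m (insert a ((univ : Finset (Fin g)).filter fun i => σ i = i)) := by
    intro q hq
    simp only [mem_filter, mem_univ, true_and] at hq
    simp only [mem_insert, mem_filter, mem_univ, true_and]
    by_cases h1 : q = m
    · exact Or.inl h1
    · by_cases h2 : q = a
      · exact Or.inr (Or.inl h2)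
      · exact Or.inr (Or.inr (by rw [← hτo q h1 h2]; exact hq))
  have h1 := Finset.card_le_card hsub
  have h2 := Finset.card_insert_le m
    (insert a ((univ : Finset (Fin g)).filter fun i => σ i = i))
  have h3 := Finset.card_insert_le a ((univ : Finset (Fin g)).filter fun i => σ i = i)
  rw [fixCount, fixCount]
  omega

end Step

theorem main_aux (g : ℕ) : ∀ (n : ℕ) (σ : Equiv.Perm (Fin g)), invCount g σ = n →
    2 * (invCount g σ : ℤ) ≥ 4 * ((ACount g σ : ℤ) + (A2Count g σ : ℤ)) + g - fixCount g σ := by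
  intro n
  induction n using Nat.strong_induction_on with
  | _ n IH =>
    intro σ hn
    by_cases h1 : σ = 1
    · subst h1
      have e1 : invCount g 1 = 0 := by
        rw [invCount, Finset.card_eq_zero, Finset.filter_eq_empty_iff]
        intro p _
        simp only [Equiv.Perm.one_apply]
        omega
      have e2 : ACount g 1 = 0 := by
        rw [ACount, Finset.card_eq_zero, Finset.filter_eq_empty_iff]
        intro p _
        simp only [Equiv.Perm.one_apply]
        omega
      have e3 : A2Count g 1 = 0 := by
        rw [A2Count, Finset.card_eq_zero, Finset.filter_eq_empty_iff]
        intro p _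
        simp only [Equiv.Perm.one_apply]
        omega
      have e4 : fixCount g 1 = g := by
        rw [fixCount]
        simp [Equiv.Perm.one_apply]
      rw [e1, e2, e3, e4]
      norm_num
    · have hne : ((univ : Finset (Fin g)).filter fun k => σ k ≠ k).Nonempty := by
        rw [Finset.filter_nonempty_iff]
        by_contra h
        push_neg at h
        exact h1 (Equiv.ext fun x => by simpa using h x (mem_univ x))
      set m := ((univ : Finset (Fin g)).filter fun k => σ k ≠ k).min' hne with hmdef
      have hmem : σ m ≠ m :=
        (Finset.mem_filter.mp (Finset.min'_mem _ hne)).2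
      have hmin : ∀ k, σ k ≠ k → m ≤ k := fun k hk =>
        Finset.min'_le ((univ : Finset (Fin g)).filter fun k => σ k ≠ k) k
          (Finset.mem_filter.mpr ⟨mem_univ k, hk⟩)
      have hlow : ∀ k, k < m → σ k = k := by
        intro k hk
        by_contra h
        exact absurd (hmin k h) (not_le.mpr hk)
      have hm : m < σ m := by
        rcases lt_or_gt_of_ne hmem with h | h
        · exact absurd (σ.injective (hlow (σ m) h)) hmem
        · exact h
      set a := σ⁻¹ m with hadef
      have hσa : σ a = m := σ.apply_symm_apply m
      have hane : a ≠ m := fun h => hmem (h ▸ hσa)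
      have ham : m < a := by
        rcases lt_or_ge a m with h | h
        · exact absurd (by rw [hlow a h] at hσa; exact hσa) hane
        · exact lt_of_le_of_ne h (Ne.symm hane)
      have hBnn : (0:ℤ) ≤ ∑ k : Fin g, (if m < k ∧ k < a ∧ σ k < σ m then (1:ℤ) else 0) :=
        Finset.sum_nonneg fun k _ => by split_ifs <;> norm_num
      have L1 := inv_step σ m a ham hm hσa hlow
      have L2 := A_step σ m a ham hm hσa hlow
      have L3 := fix_step σ m a hσa
      have hlt : invCount g (σ * Equiv.swap m a) < n := by
        have h2 : (invCount g (σ * Equiv.swap m a) : ℤ) < invCount g σ := by linarith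
        rw [← hn]
        exact_mod_cast h2
      have IH2 := IH _ hlt (σ * Equiv.swap m a) rfl
      have L3' : ((fixCount g (σ * Equiv.swap m a)) : ℤ) ≤ (fixCount g σ : ℤ) + 2 := by
        exact_mod_cast L3
      linarith

/-- For every permutation `σ` of `{1,…,g}`,
`inv(σ) − 2(A_σ + A_{σ⁻¹}) ≥ (g − fix(σ))/2`, i.e.
`2·inv(σ) ≥ 4·(A_σ + A_{σ⁻¹}) + g − fix(σ)`. -/
theorem length_minus_twice_A_ge_half_nonfixed (g : ℕ) (hg : 0 < g)
    (σ : Equiv.Perm (Fin g)) :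
    2 * (invCount g σ : ℤ) ≥
      4 * ((ACount g σ : ℤ) + (ACount g σ⁻¹ : ℤ)) + g - fixCount g σ := by
  have h := main_aux g (invCount g σ) σ rfl
  rw [ACount_inv_eq g σ]
  exact h
end

section
/- For every positive integer g and every permutation σ of {1,…,g}, inv(σ) − 2·(A_σ + A_{σ⁻¹}) ≥ #{i ∈ {1,…,g} : i < σ(i)}; equivalently, inv(σ) ≥ 2·(A_σ + A_{σ⁻¹}) + #{i : i < σ(i)}. -/
open Finset

section Aux

variable {g : ℕ} (σ : Equiv.Perm (Fin g))

/-- B-type inversions: `σ j < σ i < i < j`. -/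
private def BSet : Finset (Fin g × Fin g) :=
  (Finset.univ : Finset (Fin g × Fin g)).filter
    (fun p => p.1 < p.2 ∧ σ p.2 < σ p.1 ∧ σ p.1 < p.1)

private lemma ACount_inv_eq_BSet : ACount g σ⁻¹ = (BSet σ).card := by
  unfold ACount BSet
  refine Finset.card_bij' (fun p _ => (σ⁻¹ p.2, σ⁻¹ p.1)) (fun p _ => (σ p.2, σ p.1))
    ?_ ?_ ?_ ?_
  · rintro ⟨i, j⟩ hp
    simp only [mem_filter, mem_univ, true_and] at hp ⊢
    obtain ⟨h1, h2, h3⟩ := hp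
    refine ⟨h3, ?_, ?_⟩
    · simpa using h1
    · simpa using h2
  · rintro ⟨i, j⟩ hp
    simp only [mem_filter, mem_univ, true_and] at hp ⊢
    obtain ⟨h1, h2, h3⟩ := hp
    refine ⟨h2, ?_, ?_⟩
    · simpa using h3
    · simpa using h1
  · rintro ⟨i, j⟩ _; simp
  · rintro ⟨i, j⟩ _; simp

/-- mixed inversions with `σ j ≤ i`. -/
private def M1 : Finset (Fin g × Fin g) :=
  (Finset.univ : Finset (Fin g × Fin g)).filter
    (fun p => p.1 < p.2 ∧ σ p.2 < σ p.1 ∧ σ p.2 ≤ p.2 ∧ p.1 ≤ σ p.1 ∧ σ p.2 ≤ p.1)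

/-- mixed inversions with `i < σ j`. -/
private def M2 : Finset (Fin g × Fin g) :=
  (Finset.univ : Finset (Fin g × Fin g)).filter
    (fun p => p.1 < p.2 ∧ σ p.2 < σ p.1 ∧ σ p.2 ≤ p.2 ∧ p.1 ≤ σ p.1 ∧ p.1 < σ p.2)

private lemma inv_partition :
    invCount g σ = ACount g σ + (BSet σ).card + (M1 σ).card + (M2 σ).card := by
  unfold invCount
  have h1 := Finset.card_filter_add_card_filter_not
    (s := (Finset.univ : Finset (Fin g × Fin g)).filter
      (fun p => p.1 < p.2 ∧ σ p.2 < σ p.1)) (p := fun p => p.2 < σ p.2)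
  rw [Finset.filter_filter, Finset.filter_filter] at h1
  have e1 : ((Finset.univ : Finset (Fin g × Fin g)).filter
      (fun p => (p.1 < p.2 ∧ σ p.2 < σ p.1) ∧ p.2 < σ p.2)) =
      ((Finset.univ : Finset (Fin g × Fin g)).filter
      (fun p => p.1 < p.2 ∧ p.2 < σ p.2 ∧ σ p.2 < σ p.1)) := by
    apply Finset.filter_congr; intro p _; tauto
  -- split remainder by σ p.1 < p.1
  have h2 := Finset.card_filter_add_card_filter_not
    (s := (Finset.univ : Finset (Fin g × Fin g)).filter
      (fun p => (p.1 < p.2 ∧ σ p.2 < σ p.1) ∧ ¬ p.2 < σ p.2)) (p := fun p => σ p.1 < p.1)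
  rw [Finset.filter_filter, Finset.filter_filter] at h2
  have e2 : ((Finset.univ : Finset (Fin g × Fin g)).filter
      (fun p => ((p.1 < p.2 ∧ σ p.2 < σ p.1) ∧ ¬ p.2 < σ p.2) ∧ σ p.1 < p.1)) = BSet σ := by
    unfold BSet
    apply Finset.filter_congr; intro p _
    simp only [Fin.lt_def, Fin.le_def, not_lt]
    omega
  have h3 := Finset.card_filter_add_card_filter_not
    (s := (Finset.univ : Finset (Fin g × Fin g)).filter
      (fun p => ((p.1 < p.2 ∧ σ p.2 < σ p.1) ∧ ¬ p.2 < σ p.2) ∧ ¬ σ p.1 < p.1))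
    (p := fun p => σ p.2 ≤ p.1)
  rw [Finset.filter_filter, Finset.filter_filter] at h3
  have e3 : ((Finset.univ : Finset (Fin g × Fin g)).filter
      (fun p => (((p.1 < p.2 ∧ σ p.2 < σ p.1) ∧ ¬ p.2 < σ p.2) ∧ ¬ σ p.1 < p.1) ∧ σ p.2 ≤ p.1))
      = M1 σ := by
    unfold M1
    apply Finset.filter_congr; intro p _
    simp only [Fin.lt_def, Fin.le_def, not_lt]
    omega
  have e4 : ((Finset.univ : Finset (Fin g × Fin g)).filter
      (fun p => (((p.1 < p.2 ∧ σ p.2 < σ p.1) ∧ ¬ p.2 < σ p.2) ∧ ¬ σ p.1 < p.1) ∧ ¬ σ p.2 ≤ p.1))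
      = M2 σ := by
    unfold M2
    apply Finset.filter_congr; intro p _
    simp only [Fin.lt_def, Fin.le_def, not_lt, not_le]
    omega
  rw [e1] at h1
  rw [e2] at h2
  rw [e3, e4] at h3
  unfold ACount
  omega

private lemma M1_card_ge :
    (M1 σ).card ≥ ((Finset.univ : Finset (Fin g)).filter (fun i => i < σ i)).card
      + ACount g σ := by
  classical
  set S1 : Finset (Fin g × Fin g) :=
    (Finset.univ : Finset (Fin g × Fin g)).filter
      (fun p => p.1 < σ p.1 ∧ σ p.2 ≤ p.1 ∧ p.1 < p.2) with hS1
  set C : Finset (Fin g × Fin g) :=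
    (Finset.univ : Finset (Fin g × Fin g)).filter
      (fun p => p.1 < σ p.1 ∧ σ p.2 ≤ p.1) with hC
  set C' : Finset (Fin g × Fin g) :=
    (Finset.univ : Finset (Fin g × Fin g)).filter
      (fun p => p.1 < σ p.1 ∧ p.2 ≤ p.1) with hC'
  set T1 : Finset (Fin g × Fin g) :=
    (Finset.univ : Finset (Fin g × Fin g)).filter
      (fun p => p.1 < σ p.1 ∧ σ p.2 ≤ p.1 ∧ p.2 ≤ p.1) with hT1
  set W : Finset (Fin g × Fin g) :=
    (Finset.univ : Finset (Fin g × Fin g)).filter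
      (fun p => p.1 < σ p.1 ∧ p.2 ≤ p.1 ∧ p.1 < σ p.2) with hW
  set Wlt : Finset (Fin g × Fin g) :=
    (Finset.univ : Finset (Fin g × Fin g)).filter
      (fun p => p.1 < σ p.1 ∧ p.2 < p.1 ∧ p.1 < σ p.2) with hWlt
  -- S1 ⊆ M1
  have hsub : S1 ⊆ M1 σ := by
    intro p hp
    rw [hS1, mem_filter] at hp
    rw [M1, mem_filter]
    refine ⟨mem_univ _, ?_⟩
    obtain ⟨-, h⟩ := hp
    simp only [Fin.lt_def, Fin.le_def] at h ⊢
    omega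
  -- card C = card S1 + card T1
  have hCsplit : C.card = S1.card + T1.card := by
    have := Finset.card_filter_add_card_filter_not
      (s := C) (p := fun p => p.1 < p.2)
    rw [hC, Finset.filter_filter, Finset.filter_filter] at this
    have e1 : ((Finset.univ : Finset (Fin g × Fin g)).filter
        (fun p => (p.1 < σ p.1 ∧ σ p.2 ≤ p.1) ∧ p.1 < p.2)) = S1 := by
      rw [hS1]; apply Finset.filter_congr; intro p _; tauto
    have e2 : ((Finset.univ : Finset (Fin g × Fin g)).filter
        (fun p => (p.1 < σ p.1 ∧ σ p.2 ≤ p.1) ∧ ¬ p.1 < p.2)) = T1 := by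
      rw [hT1]; apply Finset.filter_congr; intro p _
      simp only [Fin.lt_def, Fin.le_def, not_lt]; omega
    rw [e1, e2] at this
    rw [hC]; omega
  -- card C = card C'
  have hCC' : C.card = C'.card := by
    refine Finset.card_bij' (fun p _ => (p.1, σ p.2)) (fun p _ => (p.1, σ⁻¹ p.2)) ?_ ?_ ?_ ?_
    · rintro ⟨i, j⟩ hp
      rw [hC, mem_filter] at hp
      rw [hC', mem_filter]
      exact ⟨mem_univ _, hp.2.1, hp.2.2⟩
    · rintro ⟨i, j⟩ hp
      rw [hC', mem_filter] at hp
      rw [hC, mem_filter]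
      refine ⟨mem_univ _, hp.2.1, ?_⟩
      simpa using hp.2.2
    · rintro ⟨i, j⟩ _; simp
    · rintro ⟨i, j⟩ _; simp
  -- card C' = card T1 + card W
  have hC'split : C'.card = T1.card + W.card := by
    have := Finset.card_filter_add_card_filter_not
      (s := C') (p := fun p => σ p.2 ≤ p.1)
    rw [hC', Finset.filter_filter, Finset.filter_filter] at this
    have e1 : ((Finset.univ : Finset (Fin g × Fin g)).filter
        (fun p => (p.1 < σ p.1 ∧ p.2 ≤ p.1) ∧ σ p.2 ≤ p.1)) = T1 := by
      rw [hT1]; apply Finset.filter_congr; intro p _; tauto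
    have e2 : ((Finset.univ : Finset (Fin g × Fin g)).filter
        (fun p => (p.1 < σ p.1 ∧ p.2 ≤ p.1) ∧ ¬ σ p.2 ≤ p.1)) = W := by
      rw [hW]; apply Finset.filter_congr; intro p _
      simp only [Fin.lt_def, Fin.le_def, not_le]; omega
    rw [e1, e2] at this
    rw [hC']; omega
  -- card W = asc + card Wlt
  have hWsplit : W.card =
      ((Finset.univ : Finset (Fin g)).filter (fun i => i < σ i)).card + Wlt.card := by
    have := Finset.card_filter_add_card_filter_not
      (s := W) (p := fun p => p.2 = p.1)
    rw [hW, Finset.filter_filter, Finset.filter_filter] at this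
    have e1 : ((Finset.univ : Finset (Fin g × Fin g)).filter
        (fun p => (p.1 < σ p.1 ∧ p.2 ≤ p.1 ∧ p.1 < σ p.2) ∧ p.2 = p.1)).card =
        ((Finset.univ : Finset (Fin g)).filter (fun i => i < σ i)).card := by
      refine Finset.card_bij' (fun p _ => p.1) (fun i _ => (i, i)) ?_ ?_ ?_ ?_
      · rintro ⟨i, j⟩ hp
        simp only [mem_filter, mem_univ, true_and] at hp ⊢
        exact hp.1.1
      · intro i hi
        rw [mem_filter] at hi
        rw [mem_filter]
        exact ⟨mem_univ _, ⟨hi.2, le_refl _, hi.2⟩, rfl⟩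
      · rintro ⟨i, j⟩ hp
        simp only [mem_filter, mem_univ, true_and] at hp
        exact Prod.ext rfl hp.2.symm
      · intro i _; rfl
    have e2 : ((Finset.univ : Finset (Fin g × Fin g)).filter
        (fun p => (p.1 < σ p.1 ∧ p.2 ≤ p.1 ∧ p.1 < σ p.2) ∧ ¬ p.2 = p.1)) = Wlt := by
      rw [hWlt]; apply Finset.filter_congr; intro p _
      simp only [Fin.lt_def, Fin.le_def, Fin.ext_iff]; omega
    rw [e1, e2] at this
    rw [hW]
    omega
  -- card Wlt ≥ ACount
  have hWA : ACount g σ ≤ Wlt.card := by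
    unfold ACount
    refine Finset.card_le_card_of_injOn (fun p => (p.2, p.1)) ?_ ?_
    · rintro ⟨i, j⟩ hp
      simp only [mem_coe, mem_filter, mem_univ, true_and] at hp
      rw [hWlt, mem_coe, mem_filter]
      refine ⟨mem_univ _, ?_⟩
      obtain ⟨h1, h2, h3⟩ := hp
      simp only [Fin.lt_def, Fin.le_def] at h1 h2 h3 ⊢
      omega
    · rintro ⟨i, j⟩ _ ⟨i', j'⟩ _ h
      simpa [Prod.ext_iff, and_comm] using h
  have := Finset.card_le_card hsub
  omega

private lemma M2_card_ge : (M2 σ).card ≥ (BSet σ).card := by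
  classical
  set S2 : Finset (Fin g × Fin g) :=
    (Finset.univ : Finset (Fin g × Fin g)).filter
      (fun p => σ p.2 ≤ p.2 ∧ p.1 < σ p.2 ∧ σ p.2 < σ p.1) with hS2
  set X : Finset (Fin g × Fin g) :=
    (Finset.univ : Finset (Fin g × Fin g)).filter
      (fun p => σ p.2 ≤ p.2 ∧ p.1 < σ p.2) with hX
  set Y : Finset (Fin g × Fin g) :=
    (Finset.univ : Finset (Fin g × Fin g)).filter
      (fun p => σ p.2 ≤ p.2 ∧ σ p.1 < σ p.2) with hY
  set X2 : Finset (Fin g × Fin g) :=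
    (Finset.univ : Finset (Fin g × Fin g)).filter
      (fun p => σ p.2 ≤ p.2 ∧ p.1 < σ p.2 ∧ σ p.1 < σ p.2) with hX2
  set Y2 : Finset (Fin g × Fin g) :=
    (Finset.univ : Finset (Fin g × Fin g)).filter
      (fun p => σ p.2 ≤ p.2 ∧ σ p.1 < σ p.2 ∧ σ p.2 ≤ p.1) with hY2
  -- S2 ⊆ M2
  have hsub : S2 ⊆ M2 σ := by
    intro p hp
    rw [hS2, mem_filter] at hp
    rw [M2, mem_filter]
    refine ⟨mem_univ _, ?_⟩
    obtain ⟨-, h⟩ := hp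
    simp only [Fin.lt_def, Fin.le_def] at h ⊢
    omega
  -- card X = card X2 + card S2
  have hXsplit : X.card = X2.card + S2.card := by
    have := Finset.card_filter_add_card_filter_not
      (s := X) (p := fun p => σ p.1 < σ p.2)
    rw [hX, Finset.filter_filter, Finset.filter_filter] at this
    have e1 : ((Finset.univ : Finset (Fin g × Fin g)).filter
        (fun p => (σ p.2 ≤ p.2 ∧ p.1 < σ p.2) ∧ σ p.1 < σ p.2)) = X2 := by
      rw [hX2]; apply Finset.filter_congr; intro p _; tauto
    have e2 : ((Finset.univ : Finset (Fin g × Fin g)).filter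
        (fun p => (σ p.2 ≤ p.2 ∧ p.1 < σ p.2) ∧ ¬ σ p.1 < σ p.2)) = S2 := by
      rw [hS2]; apply Finset.filter_congr; intro p _
      constructor
      · rintro ⟨⟨h1, h2⟩, h3⟩
        refine ⟨h1, h2, ?_⟩
        rcases lt_or_eq_of_le (not_lt.mp h3) with h | h
        · exact h
        · exfalso
          have : p.2 = p.1 := σ.injective h
          rw [this] at h1
          exact absurd (lt_of_lt_of_le h2 (h ▸ h1)) (lt_irrefl _)
      · rintro ⟨h1, h2, h3⟩
        exact ⟨⟨h1, h2⟩, not_lt.mpr (le_of_lt h3)⟩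
    rw [e1, e2] at this
    rw [hX]; omega
  -- card X = card Y
  have hXY : X.card = Y.card := by
    refine Finset.card_bij' (fun p _ => (σ⁻¹ p.1, p.2)) (fun p _ => (σ p.1, p.2)) ?_ ?_ ?_ ?_
    · rintro ⟨i, j⟩ hp
      rw [hX, mem_filter] at hp
      rw [hY, mem_filter]
      refine ⟨mem_univ _, hp.2.1, ?_⟩
      simpa using hp.2.2
    · rintro ⟨i, j⟩ hp
      rw [hY, mem_filter] at hp
      rw [hX, mem_filter]
      exact ⟨mem_univ _, hp.2.1, hp.2.2⟩
    · rintro ⟨i, j⟩ _; simp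
    · rintro ⟨i, j⟩ _; simp
  -- card Y = card X2 + card Y2
  have hYsplit : Y.card = X2.card + Y2.card := by
    have := Finset.card_filter_add_card_filter_not
      (s := Y) (p := fun p => p.1 < σ p.2)
    rw [hY, Finset.filter_filter, Finset.filter_filter] at this
    have e1 : ((Finset.univ : Finset (Fin g × Fin g)).filter
        (fun p => (σ p.2 ≤ p.2 ∧ σ p.1 < σ p.2) ∧ p.1 < σ p.2)) = X2 := by
      rw [hX2]; apply Finset.filter_congr; intro p _; tauto
    have e2 : ((Finset.univ : Finset (Fin g × Fin g)).filter
        (fun p => (σ p.2 ≤ p.2 ∧ σ p.1 < σ p.2) ∧ ¬ p.1 < σ p.2)) = Y2 := by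
      rw [hY2]; apply Finset.filter_congr; intro p _
      simp only [Fin.lt_def, Fin.le_def, not_lt]; omega
    rw [e1, e2] at this
    rw [hY]; omega
  -- card Y2 ≥ card BSet
  have hYB : (BSet σ).card ≤ Y2.card := by
    rw [BSet]
    refine Finset.card_le_card_of_injOn (fun p => (p.2, p.1)) ?_ ?_
    · rintro ⟨i, j⟩ hp
      simp only [mem_coe, mem_filter, mem_univ, true_and] at hp
      rw [hY2, mem_coe, mem_filter]
      refine ⟨mem_univ _, ?_⟩
      obtain ⟨h1, h2, h3⟩ := hp
      simp only [Fin.lt_def, Fin.le_def] at h1 h2 h3 ⊢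
      omega
    · rintro ⟨i, j⟩ _ ⟨i', j'⟩ _ h
      simpa [Prod.ext_iff, and_comm] using h
  have := Finset.card_le_card hsub
  omega

end Aux

/-- For every permutation `σ` of `{1,…,g}`,
`inv(σ) ≥ 2·(A_σ + A_{σ⁻¹}) + #{i : i < σ(i)}`. -/
theorem inv_ge_twice_A_add_ascents (g : ℕ) (hg : 0 < g) (σ : Equiv.Perm (Fin g)) :
    invCount g σ ≥ 2 * (ACount g σ + ACount g σ⁻¹) +
      ((Finset.univ : Finset (Fin g)).filter (fun i => i < σ i)).card := by
  have hpart := inv_partition σ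
  have hM1 := M1_card_ge σ
  have hM2 := M2_card_ge σ
  have hB := ACount_inv_eq_BSet σ
  omega
end

section
/- For every positive integer g and every permutation σ of {1,…,g}, inv(σ) = A_σ + A_{σ⁻¹} + #{(i,j) : 1 ≤ i < j ≤ g, σ(i) > σ(j), i ≤ σ(i), and σ(j) ≤ j}. In other words, the inversions of σ are partitioned into the pairs counted by A_σ (those with j < σ(j)), the pairs counted by A_{σ⁻¹} (those with σ(i) < i), and the inversions (i,j) with i ≤ σ(i) and σ(j) ≤ j. -/
open Finset

/-- The inversions of `σ` are partitioned into the pairs counted by `A_σ`,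
the pairs counted by `A_{σ⁻¹}`, and the inversions `(i,j)` with `i ≤ σ(i)`
and `σ(j) ≤ j`:
`inv(σ) = A_σ + A_{σ⁻¹} + #{(i,j) : i < j, σ(i) > σ(j), i ≤ σ(i), σ(j) ≤ j}`. -/
theorem inv_eq_A_add_A_inv_add_rest (g : ℕ) (hg : 0 < g) (σ : Equiv.Perm (Fin g)) :
    invCount g σ = ACount g σ + ACount g σ⁻¹ +
      ((Finset.univ : Finset (Fin g × Fin g)).filter
        (fun p => p.1 < p.2 ∧ σ p.2 < σ p.1 ∧ p.1 ≤ σ p.1 ∧ σ p.2 ≤ p.2)).card := by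
  classical
  have hsplit1 :
      invCount g σ =
        ((Finset.univ : Finset (Fin g × Fin g)).filter
          (fun p => (p.1 < p.2 ∧ σ p.2 < σ p.1) ∧ p.2 < σ p.2)).card +
        ((Finset.univ : Finset (Fin g × Fin g)).filter
          (fun p => (p.1 < p.2 ∧ σ p.2 < σ p.1) ∧ ¬ p.2 < σ p.2)).card := by
    have := Finset.card_filter_add_card_filter_not
      (s := (Finset.univ : Finset (Fin g × Fin g)).filter
        (fun p => p.1 < p.2 ∧ σ p.2 < σ p.1)) (p := fun p => p.2 < σ p.2)
    simp only [Finset.filter_filter] at this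
    rw [invCount, ← this]
  have hsplit2 :
      ((Finset.univ : Finset (Fin g × Fin g)).filter
          (fun p => (p.1 < p.2 ∧ σ p.2 < σ p.1) ∧ ¬ p.2 < σ p.2)).card =
        ((Finset.univ : Finset (Fin g × Fin g)).filter
          (fun p => ((p.1 < p.2 ∧ σ p.2 < σ p.1) ∧ ¬ p.2 < σ p.2) ∧ σ p.1 < p.1)).card +
        ((Finset.univ : Finset (Fin g × Fin g)).filter
          (fun p => ((p.1 < p.2 ∧ σ p.2 < σ p.1) ∧ ¬ p.2 < σ p.2) ∧ ¬ σ p.1 < p.1)).card := by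
    have := Finset.card_filter_add_card_filter_not
      (s := (Finset.univ : Finset (Fin g × Fin g)).filter
        (fun p => (p.1 < p.2 ∧ σ p.2 < σ p.1) ∧ ¬ p.2 < σ p.2))
      (p := fun p => σ p.1 < p.1)
    simp only [Finset.filter_filter] at this
    rw [← this]
  have h1 :
      ((Finset.univ : Finset (Fin g × Fin g)).filter
          (fun p => (p.1 < p.2 ∧ σ p.2 < σ p.1) ∧ p.2 < σ p.2)).card = ACount g σ := by
    rw [ACount]
    congr 1
    apply Finset.filter_congr
    intro p _
    constructor
    · rintro ⟨⟨h1, h2⟩, h3⟩; exact ⟨h1, h3, h2⟩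
    · rintro ⟨h1, h3, h2⟩; exact ⟨⟨h1, h2⟩, h3⟩
  have h2 :
      ((Finset.univ : Finset (Fin g × Fin g)).filter
          (fun p => ((p.1 < p.2 ∧ σ p.2 < σ p.1) ∧ ¬ p.2 < σ p.2) ∧ σ p.1 < p.1)).card =
        ACount g σ⁻¹ := by
    rw [ACount]
    apply Finset.card_bij (fun p _ => (σ p.2, σ p.1))
    · rintro ⟨i, j⟩ hp
      simp only [Finset.mem_filter, Finset.mem_univ, true_and] at hp ⊢
      obtain ⟨⟨⟨hij, hs⟩, -⟩, hii⟩ := hp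
      refine ⟨hs, ?_, ?_⟩ <;> simp [Equiv.symm_apply_apply]
      · exact hii
      · exact hij
    · rintro ⟨i, j⟩ hp ⟨i', j'⟩ hp' h
      simp only [Prod.mk.injEq] at h
      have h1 := σ.injective h.1
      have h2 := σ.injective h.2
      simp [Prod.ext_iff, h1, h2]
    · rintro ⟨a, b⟩ hq
      simp only [Finset.mem_filter, Finset.mem_univ, true_and] at hq
      obtain ⟨hab, hb, hba⟩ := hq
      refine ⟨(σ⁻¹ b, σ⁻¹ a), ?_, ?_⟩
      · simp only [Finset.mem_filter, Finset.mem_univ, true_and,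
          Equiv.Perm.coe_inv, Equiv.apply_symm_apply]
        refine ⟨⟨⟨hba, hab⟩, ?_⟩, hb⟩
        simp only [not_lt]
        exact le_of_lt (lt_trans hab (lt_of_lt_of_le hb (le_of_lt hba)))
      · simp [Equiv.apply_symm_apply]
  have h3 :
      ((Finset.univ : Finset (Fin g × Fin g)).filter
          (fun p => ((p.1 < p.2 ∧ σ p.2 < σ p.1) ∧ ¬ p.2 < σ p.2) ∧ ¬ σ p.1 < p.1)).card =
        ((Finset.univ : Finset (Fin g × Fin g)).filter
          (fun p => p.1 < p.2 ∧ σ p.2 < σ p.1 ∧ p.1 ≤ σ p.1 ∧ σ p.2 ≤ p.2)).card := by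
    congr 1
    apply Finset.filter_congr
    intro p _
    constructor
    · rintro ⟨⟨⟨h1, h2⟩, h3⟩, h4⟩
      exact ⟨h1, h2, not_lt.mp h4, not_lt.mp h3⟩
    · rintro ⟨h1, h2, h3, h4⟩
      exact ⟨⟨⟨h1, h2⟩, not_lt.mpr h4⟩, not_lt.mpr h3⟩
  rw [hsplit1, hsplit2, h1, h2, h3]
  omega
end

section
/- For every positive integer g and every permutation σ of {1,…,g}, #{(i,j) ∈ {1,…,g}² : i ≤ j < σ(i) and σ(j) > j} = #{(i,j) ∈ {1,…,g}² : σ(i) < σ(j) ≤ i and σ(j) > j}. -/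
open Finset

namespace CSZaux

variable {g : ℕ} (σ : Equiv.Perm (Fin g))

/-- The set of arcs crossing the gap between `k` and `k+1`. -/
def S (k : ℕ) : Finset (Fin g) := univ.filter (fun i => (i : ℕ) ≤ k ∧ k < (σ i : ℕ))

def f (k : ℕ) : ℤ := ((S σ k).card : ℤ)

def A (k : ℕ) : ℤ := if h : k < g then (if k < ((σ ⟨k, h⟩ : Fin g) : ℕ) then 1 else 0) else 0

def B (k : ℕ) : ℤ := if h : k < g then (if ((σ.symm ⟨k, h⟩ : Fin g) : ℕ) < k then 1 else 0) else 0

lemma A01 (k : ℕ) : A σ k = 0 ∨ A σ k = 1 := by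
  unfold A; split_ifs <;> simp

lemma B01 (k : ℕ) : B σ k = 0 ∨ B σ k = 1 := by
  unfold B; split_ifs <;> simp

lemma B_zero : B σ 0 = 0 := by
  unfold B; split_ifs <;> first | rfl | omega

lemma f_top (k : ℕ) (hk : g ≤ k + 1) : f σ k = 0 := by
  have hS : S σ k = ∅ := by
    ext i
    simp only [S, mem_filter, mem_univ, true_and, Finset.notMem_empty, iff_false]
    rintro ⟨h1, h2⟩
    have := (σ i).isLt
    omega
  simp [f, hS]

lemma f_zero : f σ 0 = A σ 0 := by
  by_cases h : 0 < g
  · have h0val : ((⟨0, h⟩ : Fin g) : ℕ) = 0 := rfl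
    have hA : A σ 0 = if 0 < ((σ ⟨0, h⟩ : Fin g) : ℕ) then 1 else 0 := by
      unfold A; rw [dif_pos h]
    by_cases h0 : 0 < ((σ ⟨0, h⟩ : Fin g) : ℕ)
    · have hS : S σ 0 = {⟨0, h⟩} := by
        ext i
        simp only [S, mem_filter, mem_univ, true_and, Finset.mem_singleton]
        constructor
        · rintro ⟨h1, h2⟩; exact Fin.ext (by omega)
        · rintro rfl; exact ⟨by omega, h0⟩
      rw [hA, if_pos h0]; simp [f, hS]
    · have hS : S σ 0 = ∅ := by
        ext i
        simp only [S, mem_filter, mem_univ, true_and, Finset.notMem_empty, iff_false]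
        rintro ⟨h1, h2⟩
        have : i = ⟨0, h⟩ := Fin.ext (by omega)
        rw [this] at h2; omega
      rw [hA, if_neg h0]; simp [f, hS]
  · rw [f_top σ 0 (by omega)]
    unfold A; rw [dif_neg (by omega)]

lemma f_succ (k : ℕ) : f σ (k+1) = f σ k + A σ (k+1) - B σ (k+1) := by
  by_cases h : k + 1 < g
  · set x : Fin g := ⟨k+1, h⟩ with hx
    set T : Finset (Fin g) := univ.filter (fun i => (i:ℕ) ≤ k ∧ k+1 < (σ i : ℕ)) with hT
    have hxT : x ∉ T := by
      simp only [hT, mem_filter, mem_univ, true_and, not_and]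
      intro hc; have hc' : k + 1 ≤ k := hc; omega
    have hsx : ((σ (σ.symm x) : Fin g) : ℕ) = k + 1 := by rw [Equiv.apply_symm_apply]
    have hyT : σ.symm x ∉ T := by
      simp only [hT, mem_filter, mem_univ, true_and, not_and]
      intro _; omega
    have hS1 : S σ (k+1) = if (k+1:ℕ) < ((σ x : Fin g) : ℕ) then insert x T else T := by
      split_ifs with hc
      · ext i
        simp only [S, hT, mem_filter, mem_univ, true_and, Finset.mem_insert]
        constructor
        · rintro ⟨h1, h2⟩
          rcases Nat.lt_or_ge (i:ℕ) (k+1) with h3 | h3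
          · exact Or.inr ⟨by omega, h2⟩
          · refine Or.inl (Fin.ext ?_)
            show (i:ℕ) = k + 1
            omega
        · rintro (rfl | ⟨h1, h2⟩)
          · exact ⟨le_refl _, hc⟩
          · exact ⟨by omega, h2⟩
      · ext i
        simp only [S, hT, mem_filter, mem_univ, true_and]
        constructor
        · rintro ⟨h1, h2⟩
          refine ⟨?_, h2⟩
          by_cases hik : (i:ℕ) = k + 1
          · exfalso; have : i = x := Fin.ext hik
            rw [this] at h2; omega
          · omega
        · rintro ⟨h1, h2⟩; exact ⟨by omega, h2⟩
    have hS2 : S σ k = if ((σ.symm x : Fin g) : ℕ) ≤ k then insert (σ.symm x) T else T := by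
      split_ifs with hc
      · ext i
        simp only [S, hT, mem_filter, mem_univ, true_and, Finset.mem_insert]
        constructor
        · rintro ⟨h1, h2⟩
          by_cases hik : ((σ i : Fin g) : ℕ) = k + 1
          · have : σ i = x := Fin.ext hik
            exact Or.inl (by rw [← this, Equiv.symm_apply_apply])
          · exact Or.inr ⟨h1, by omega⟩
        · rintro (rfl | ⟨h1, h2⟩)
          · exact ⟨hc, by omega⟩
          · exact ⟨h1, by omega⟩
      · ext i
        simp only [S, hT, mem_filter, mem_univ, true_and]
        constructor
        · rintro ⟨h1, h2⟩
          refine ⟨h1, ?_⟩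
          by_cases hik : ((σ i : Fin g) : ℕ) = k + 1
          · exfalso
            have : σ.symm x = i := by
              have : σ i = x := Fin.ext hik
              rw [← this, Equiv.symm_apply_apply]
            rw [this] at hc; omega
          · omega
        · rintro ⟨h1, h2⟩; exact ⟨h1, by omega⟩
    have hA : A σ (k+1) = if (k+1:ℕ) < ((σ x : Fin g) : ℕ) then 1 else 0 := by
      unfold A; rw [dif_pos h]
    have hB : B σ (k+1) = if ((σ.symm x : Fin g) : ℕ) ≤ k then 1 else 0 := by
      unfold B; rw [dif_pos h]
      congr 1
      simp [Nat.lt_succ_iff]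
      rfl
    rw [f, f, hS1, hS2, hA, hB]
    split_ifs with h1 h2 h2 <;>
      simp [Finset.card_insert_of_notMem, hxT, hyT] <;> push_cast <;> ring
  · rw [f_top σ k (by omega), f_top σ (k+1) (by omega)]
    unfold A B
    rw [dif_neg h, dif_neg h]; ring


lemma card_le (t : ℕ) (ht : t < g) :
    ((univ : Finset (Fin g)).filter (fun i : Fin g => (i:ℕ) ≤ t)).card = t + 1 := by
  rw [← Finset.card_range (t+1)]
  refine Finset.card_nbij (fun a : Fin g => (a : ℕ)) ?_ ?_ ?_
  · intro a ha
    simp only [Finset.mem_coe, mem_filter, mem_univ, true_and] at ha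
    simp only [Finset.mem_coe, Finset.mem_range]
    omega
  · intro a _ b _ hab
    exact Fin.ext hab
  · intro b hb
    simp only [Finset.mem_coe, Finset.mem_range] at hb
    refine ⟨⟨b, by omega⟩, ?_, rfl⟩
    simp only [Finset.mem_coe, mem_filter, mem_univ, true_and]
    exact (by omega : b ≤ t)

lemma card_le_perm (t : ℕ) (ht : t < g) :
    ((univ : Finset (Fin g)).filter (fun i : Fin g => ((σ i : Fin g) : ℕ) ≤ t)).card = t + 1 := by
  rw [← card_le (g := g) t ht]
  refine Finset.card_nbij (fun a => σ a) ?_ ?_ ?_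
  · intro a ha
    simp only [Finset.mem_coe, mem_filter, mem_univ, true_and] at ha ⊢
    exact ha
  · intro a _ b _ hab
    exact σ.injective hab
  · intro b hb
    refine ⟨σ.symm b, ?_, by simp⟩
    simp only [Finset.mem_coe, mem_filter, mem_univ, true_and] at hb ⊢
    simpa using hb

lemma cross (t : ℕ) (ht : t < g) :
    ((univ : Finset (Fin g)).filter (fun i : Fin g => ((σ i : Fin g) : ℕ) ≤ t ∧ t < (i:ℕ))).card
      = (S σ t).card := by
  classical
  have h1 := Finset.card_filter_add_card_filter_not
    (s := (univ : Finset (Fin g)).filter (fun i : Fin g => ((σ i : Fin g) : ℕ) ≤ t))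
    (p := fun i : Fin g => (i:ℕ) ≤ t)
  have h2 := Finset.card_filter_add_card_filter_not
    (s := (univ : Finset (Fin g)).filter (fun i : Fin g => (i:ℕ) ≤ t))
    (p := fun i : Fin g => ((σ i : Fin g) : ℕ) ≤ t)
  rw [Finset.filter_filter, Finset.filter_filter, card_le_perm σ t ht] at h1
  rw [Finset.filter_filter, Finset.filter_filter, card_le (g := g) t ht] at h2
  have e0 : (univ : Finset (Fin g)).filter (fun i : Fin g => ((σ i : Fin g) : ℕ) ≤ t ∧ (i:ℕ) ≤ t)
      = (univ : Finset (Fin g)).filter (fun i : Fin g => (i:ℕ) ≤ t ∧ ((σ i : Fin g) : ℕ) ≤ t) := by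
    apply Finset.filter_congr
    intro i _
    exact and_comm
  have e1 : (univ : Finset (Fin g)).filter (fun i : Fin g => ((σ i : Fin g) : ℕ) ≤ t ∧ ¬ (i:ℕ) ≤ t)
      = (univ : Finset (Fin g)).filter (fun i : Fin g => ((σ i : Fin g) : ℕ) ≤ t ∧ t < (i:ℕ)) := by
    apply Finset.filter_congr
    intro i _
    simp [Nat.not_le]
  have e2 : (univ : Finset (Fin g)).filter (fun i : Fin g => (i:ℕ) ≤ t ∧ ¬ ((σ i : Fin g) : ℕ) ≤ t)
      = S σ t := by
    unfold S
    apply Finset.filter_congr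
    intro i _
    simp [Nat.not_le]
  rw [e0, e1] at h1
  rw [e2] at h2
  omega

lemma sumAB : ∑ k ∈ range g, A σ k = ∑ k ∈ range g, B σ k := by
  rw [← Fin.sum_univ_eq_sum_range (fun k => A σ k) g,
      ← Fin.sum_univ_eq_sum_range (fun k => B σ k) g]
  have hA : ∀ i : Fin g, A σ (i : ℕ) = if (i:ℕ) < ((σ i : Fin g):ℕ) then 1 else 0 := by
    intro i
    unfold A
    rw [dif_pos i.isLt]
  have hB : ∀ i : Fin g, B σ (i : ℕ) = if ((σ.symm i : Fin g):ℕ) < (i:ℕ) then 1 else 0 := by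
    intro i
    unfold B
    rw [dif_pos i.isLt]
  simp only [hA, hB]
  rw [← Equiv.sum_comp σ (fun i => if ((σ.symm i : Fin g):ℕ) < (i:ℕ) then (1:ℤ) else 0)]
  simp

lemma key (N : ℕ) :
    2 * ∑ k ∈ range (N+1), f σ k * A σ k =
      2 * ∑ k ∈ range N, f σ k * B σ (k+1) + f σ N ^ 2
        + ∑ k ∈ range (N+1), A σ k - ∑ k ∈ range N, B σ (k+1) := by
  induction N with
  | zero =>
    simp only [Finset.sum_range_succ, Finset.sum_range_zero, f_zero]
    rcases A01 σ 0 with h | h <;> rw [h] <;> ring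
  | succ N ih =>
    rw [Finset.sum_range_succ (fun k => f σ k * A σ k) (N+1),
        Finset.sum_range_succ (fun k => f σ k * B σ (k+1)) N,
        Finset.sum_range_succ (A σ) (N+1),
        Finset.sum_range_succ (fun k => B σ (k+1)) N]
    have hf := f_succ σ N
    rcases A01 σ (N+1) with hA | hA <;> rcases B01 σ (N+1) with hB | hB <;>
      rw [hA, hB] at hf ⊢ <;> rw [hf] <;> ring_nf <;> ring_nf at ih <;> linarith

lemma main_sum (hg : 0 < g) :
    ∑ k ∈ range g, f σ k * A σ k = ∑ k ∈ range g, f σ k * B σ (k+1) := by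
  have hkey := key σ g
  have hfg : f σ g = 0 := f_top σ g (by omega)
  have hAg : A σ g = 0 := by unfold A; rw [dif_neg (lt_irrefl g)]
  have hBg : B σ g = 0 := by unfold B; rw [dif_neg (lt_irrefl g)]
  rw [Finset.sum_range_succ (fun k => f σ k * A σ k) g,
      Finset.sum_range_succ (A σ) g, hfg, hAg] at hkey
  have hshift : ∑ k ∈ range g, B σ (k+1) = ∑ k ∈ range g, B σ k := by
    have h1 := Finset.sum_range_succ' (B σ) g
    have h2 := Finset.sum_range_succ (B σ) g
    rw [B_zero] at h1
    rw [hBg] at h2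
    rw [h2] at h1
    linarith
  rw [hshift, ← sumAB σ] at hkey
  ring_nf at hkey
  have e : ∑ x ∈ range g, f σ x * B σ (1 + x) = ∑ k ∈ range g, f σ k * B σ (k + 1) :=
    Finset.sum_congr rfl (fun k _ => by rw [Nat.add_comm])
  rw [e] at hkey
  linarith


lemma shift (hg : 0 < g) :
    ∑ k ∈ range g, B σ k * f σ (k - 1) = ∑ k ∈ range g, f σ k * B σ (k+1) := by
  obtain ⟨n, rfl⟩ : ∃ n, g = n + 1 := ⟨g - 1, by omega⟩
  rw [Finset.sum_range_succ' (fun k => B σ k * f σ (k-1)) n,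
      Finset.sum_range_succ (fun k => f σ k * B σ (k+1)) n]
  have hBtop : B σ (n+1) = 0 := by unfold B; rw [dif_neg (lt_irrefl _)]
  rw [B_zero, hBtop]
  simp only [Nat.add_sub_cancel, zero_mul, mul_zero, add_zero]
  apply Finset.sum_congr rfl
  intro k _
  ring

theorem result (hg : 0 < g) :
    ((Finset.univ : Finset (Fin g × Fin g)).filter
      (fun p => p.1 ≤ p.2 ∧ p.2 < σ p.1 ∧ p.2 < σ p.2)).card =
    ((Finset.univ : Finset (Fin g × Fin g)).filter
      (fun p => σ p.1 < σ p.2 ∧ σ p.2 ≤ p.1 ∧ p.2 < σ p.2)).card := by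
  classical
  have hL : (((Finset.univ : Finset (Fin g × Fin g)).filter
      (fun p => p.1 ≤ p.2 ∧ p.2 < σ p.1 ∧ p.2 < σ p.2)).card : ℤ)
      = ∑ k ∈ range g, f σ k * A σ k := by
    rw [Finset.card_filter]
    push_cast
    rw [Fintype.sum_prod_type, Finset.sum_comm]
    rw [← Fin.sum_univ_eq_sum_range (fun k => f σ k * A σ k) g]
    apply Finset.sum_congr rfl
    intro j _
    have hAj : A σ (j : ℕ) = if (j:ℕ) < ((σ j : Fin g):ℕ) then 1 else 0 := by
      unfold A; rw [dif_pos j.isLt]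
    by_cases hj : (j:ℕ) < ((σ j : Fin g):ℕ)
    · rw [hAj, if_pos hj, mul_one]
      have hcong : ∀ i : Fin g,
          (if (i ≤ j ∧ j < σ i ∧ j < σ j) then (1:ℤ) else 0)
            = if ((i:ℕ) ≤ (j:ℕ) ∧ (j:ℕ) < ((σ i : Fin g):ℕ)) then (1:ℤ) else 0 := by
        intro i
        refine if_congr ?_ rfl rfl
        simp only [Fin.le_def, Fin.lt_def]
        constructor
        · rintro ⟨h1, h2, -⟩; exact ⟨h1, h2⟩
        · rintro ⟨h1, h2⟩; exact ⟨h1, h2, hj⟩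
      rw [Finset.sum_congr rfl (fun i _ => hcong i), Finset.sum_boole]
      rfl
    · rw [hAj, if_neg hj, mul_zero]
      apply Finset.sum_eq_zero
      intro i _
      rw [if_neg]
      rintro ⟨-, -, h3⟩
      exact hj (Fin.lt_def.mp h3)
  have hR : (((Finset.univ : Finset (Fin g × Fin g)).filter
      (fun p => σ p.1 < σ p.2 ∧ σ p.2 ≤ p.1 ∧ p.2 < σ p.2)).card : ℤ)
      = ∑ k ∈ range g, f σ k * B σ (k+1) := by
    rw [Finset.card_filter]
    push_cast
    rw [Fintype.sum_prod_type, Finset.sum_comm]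
    rw [← shift σ hg,
        ← Fin.sum_univ_eq_sum_range (fun k => B σ k * f σ (k - 1)) g,
        ← Equiv.sum_comp σ (fun m => B σ (m : ℕ) * f σ ((m:ℕ) - 1))]
    apply Finset.sum_congr rfl
    intro j _
    have hBj : B σ ((σ j : Fin g) : ℕ) = if (j:ℕ) < ((σ j : Fin g):ℕ) then 1 else 0 := by
      unfold B
      rw [dif_pos (σ j).isLt]
      congr 1
      · rw [show ((⟨((σ j : Fin g):ℕ), (σ j).isLt⟩ : Fin g)) = σ j from Fin.eta _ _,
            Equiv.symm_apply_apply]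
    by_cases hj : (j:ℕ) < ((σ j : Fin g):ℕ)
    · rw [hBj, if_pos hj, one_mul]
      have ht : ((σ j : Fin g):ℕ) - 1 < g := by
        have := (σ j).isLt; omega
      have hcong : ∀ i : Fin g,
          (if (σ i < σ j ∧ σ j ≤ i ∧ j < σ j) then (1:ℤ) else 0)
            = if (((σ i : Fin g):ℕ) ≤ ((σ j : Fin g):ℕ) - 1
                ∧ ((σ j : Fin g):ℕ) - 1 < (i:ℕ)) then (1:ℤ) else 0 := by
        intro i
        refine if_congr ?_ rfl rfl
        simp only [Fin.le_def, Fin.lt_def]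
        constructor
        · rintro ⟨h1, h2, -⟩; omega
        · rintro ⟨h1, h2⟩; refine ⟨by omega, by omega, hj⟩
      rw [Finset.sum_congr rfl (fun i _ => hcong i), Finset.sum_boole,
          cross σ (((σ j : Fin g):ℕ) - 1) ht]
      rfl
    · rw [hBj, if_neg hj, zero_mul]
      apply Finset.sum_eq_zero
      intro i _
      rw [if_neg]
      rintro ⟨-, -, h3⟩
      exact hj (Fin.lt_def.mp h3)
  have hmain := main_sum σ hg
  have : (((Finset.univ : Finset (Fin g × Fin g)).filter
      (fun p => p.1 ≤ p.2 ∧ p.2 < σ p.1 ∧ p.2 < σ p.2)).card : ℤ)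
      = (((Finset.univ : Finset (Fin g × Fin g)).filter
      (fun p => σ p.1 < σ p.2 ∧ σ p.2 ≤ p.1 ∧ p.2 < σ p.2)).card : ℤ) := by
    rw [hL, hR, hmain]
  exact_mod_cast this

end CSZaux


/-- Clarke–Steingrímsson–Zeng lemma, first equality: for every permutation `σ`
of `{1,…,g}` (modeled on `Fin g`),
`#{(i,j) : i ≤ j < σ(i), σ(j) > j} = #{(i,j) : σ(i) < σ(j) ≤ i, σ(j) > j}`. -/
theorem csz_count_eq_of_gt (g : ℕ) (hg : 0 < g) (σ : Equiv.Perm (Fin g)) :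
    ((Finset.univ : Finset (Fin g × Fin g)).filter
      (fun p => p.1 ≤ p.2 ∧ p.2 < σ p.1 ∧ p.2 < σ p.2)).card =
    ((Finset.univ : Finset (Fin g × Fin g)).filter
      (fun p => σ p.1 < σ p.2 ∧ σ p.2 ≤ p.1 ∧ p.2 < σ p.2)).card := by
  exact CSZaux.result σ hg
end

section
/- For every positive integer g and every permutation σ of {1,…,g}, #{(i,j) ∈ {1,…,g}² : i ≤ j < σ(i) and σ(j) ≤ j} = #{(i,j) ∈ {1,…,g}² : σ(i) < σ(j) ≤ i and σ(j) ≤ j}. -/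
open Finset

private def csz_F {g : ℕ} (σ : Equiv.Perm (Fin g)) (t : ℕ) : ℕ :=
  ∑ i : Fin g, if (i : ℕ) < t ∧ t ≤ (σ i : ℕ) then 1 else 0

private lemma csz_F_zero {g : ℕ} (σ : Equiv.Perm (Fin g)) : csz_F σ 0 = 0 := by
  simp [csz_F]

private lemma csz_F_top {g : ℕ} (σ : Equiv.Perm (Fin g)) : csz_F σ g = 0 := by
  refine Finset.sum_eq_zero fun i _ => ?_
  have h2 := (σ i).isLt
  split_ifs with h
  · omega
  · rfl

private lemma csz_balance {g : ℕ} (σ : Equiv.Perm (Fin g)) (t : ℕ) :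
    (∑ i : Fin g, if t ≤ (i : ℕ) ∧ (σ i : ℕ) < t then 1 else 0) = csz_F σ t := by
  have hperm : (∑ i : Fin g, if (σ i : ℕ) < t then (1:ℕ) else 0)
      = ∑ i : Fin g, if (i : ℕ) < t then (1:ℕ) else 0 :=
    Equiv.sum_comp σ (fun k : Fin g => if (k : ℕ) < t then (1:ℕ) else 0)
  have h1 : (∑ i : Fin g, ((if t ≤ (i : ℕ) ∧ (σ i : ℕ) < t then 1 else 0)
        + (if (i : ℕ) < t ∧ (σ i : ℕ) < t then 1 else 0)))
      = ∑ i : Fin g, if (σ i : ℕ) < t then (1:ℕ) else 0 :=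
    Finset.sum_congr rfl fun i _ => by split_ifs <;> omega
  have h2 : (∑ i : Fin g, ((if (i : ℕ) < t ∧ t ≤ (σ i : ℕ) then 1 else 0)
        + (if (i : ℕ) < t ∧ (σ i : ℕ) < t then 1 else 0)))
      = ∑ i : Fin g, if (i : ℕ) < t then (1:ℕ) else 0 :=
    Finset.sum_congr rfl fun i _ => by split_ifs <;> omega
  rw [Finset.sum_add_distrib] at h1 h2
  unfold csz_F
  omega

private lemma csz_step {g : ℕ} (σ : Equiv.Perm (Fin g)) (j : Fin g) :
    csz_F σ ((j : ℕ) + 1) + (if σ j ≤ j then 1 else 0)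
      = csz_F σ (j : ℕ) + (if j ≤ σ.symm j then 1 else 0) := by
  have hA : csz_F σ ((j : ℕ) + 1)
      = (∑ i : Fin g, if (i : ℕ) < (j : ℕ) ∧ (j : ℕ) + 1 ≤ (σ i : ℕ) then 1 else 0)
        + (if (j : ℕ) + 1 ≤ (σ j : ℕ) then 1 else 0) := by
    unfold csz_F
    have h1 : (∑ i : Fin g, if (i : ℕ) < (j : ℕ) + 1 ∧ (j : ℕ) + 1 ≤ (σ i : ℕ) then (1:ℕ) else 0)
        = ∑ i : Fin g, ((if (i : ℕ) < (j : ℕ) ∧ (j : ℕ) + 1 ≤ (σ i : ℕ) then 1 else 0)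
          + (if i = j ∧ (j : ℕ) + 1 ≤ (σ i : ℕ) then 1 else 0)) := by
      refine Finset.sum_congr rfl fun i _ => ?_
      have hij : i = j ↔ (i : ℕ) = (j : ℕ) := Fin.ext_iff
      simp only [hij]
      split_ifs <;> omega
    rw [h1, Finset.sum_add_distrib]
    congr 1
    have h2 : ∀ i : Fin g, (if i = j ∧ (j : ℕ) + 1 ≤ (σ i : ℕ) then (1:ℕ) else 0)
        = if i = j then (if (j : ℕ) + 1 ≤ (σ i : ℕ) then 1 else 0) else 0 := by
      intro i; split_ifs <;> tauto
    rw [Finset.sum_congr rfl fun i _ => h2 i, Finset.sum_ite_eq' univ j]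
    simp
  have hB : csz_F σ (j : ℕ)
      = (∑ i : Fin g, if (i : ℕ) < (j : ℕ) ∧ (j : ℕ) + 1 ≤ (σ i : ℕ) then 1 else 0)
        + (if (σ.symm j : ℕ) < (j : ℕ) then 1 else 0) := by
    unfold csz_F
    have h1 : (∑ i : Fin g, if (i : ℕ) < (j : ℕ) ∧ (j : ℕ) ≤ (σ i : ℕ) then (1:ℕ) else 0)
        = ∑ i : Fin g, ((if (i : ℕ) < (j : ℕ) ∧ (j : ℕ) + 1 ≤ (σ i : ℕ) then 1 else 0)
          + (if i = σ.symm j ∧ (i : ℕ) < (j : ℕ) then 1 else 0)) := by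
      refine Finset.sum_congr rfl fun i _ => ?_
      have hij : i = σ.symm j ↔ (σ i : ℕ) = (j : ℕ) := by
        rw [Equiv.eq_symm_apply, Fin.ext_iff]
      simp only [hij]
      split_ifs <;> omega
    rw [h1, Finset.sum_add_distrib]
    congr 1
    have h2 : ∀ i : Fin g, (if i = σ.symm j ∧ (i : ℕ) < (j : ℕ) then (1:ℕ) else 0)
        = if i = σ.symm j then (if (i : ℕ) < (j : ℕ) then 1 else 0) else 0 := by
      intro i; split_ifs <;> tauto
    rw [Finset.sum_congr rfl fun i _ => h2 i, Finset.sum_ite_eq' univ (σ.symm j)]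
    simp
  rw [hA, hB]
  simp only [Fin.le_def]
  split_ifs <;> omega

private lemma csz_shift {g : ℕ} (σ : Equiv.Perm (Fin g)) (h : ℕ → ℕ) :
    (∑ j : Fin g, h (csz_F σ ((j : ℕ) + 1))) + h (csz_F σ 0)
      = (∑ j : Fin g, h (csz_F σ (j : ℕ))) + h (csz_F σ g) := by
  have l : ∀ f : ℕ → ℕ, (∑ j : Fin g, f ((j : ℕ) + 1)) + f 0
      = (∑ j : Fin g, f (j : ℕ)) + f g := by
    intro f
    rw [Fin.sum_univ_eq_sum_range (fun t => f (t + 1)) g,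
      Fin.sum_univ_eq_sum_range (fun t => f t) g,
      ← Finset.sum_range_succ' (fun t => f t) g, Finset.sum_range_succ (fun t => f t) g]
  exact l (fun t => h (csz_F σ t))

private lemma csz_quad (P Q : Prop) [Decidable P] [Decidable Q] (x y : ℕ)
    (hs : y + (if P then 1 else 0) = x + (if Q then 1 else 0)) :
      2 * ((if Q then 1 else 0) * x) + x ^ 2 + y
        = 2 * ((if P then 1 else 0) * y) + y ^ 2 + x := by
  split_ifs at hs ⊢
  · obtain rfl : y = x := by omega
    ring
  · obtain rfl : y = x + 1 := by omega
    ring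
  · obtain rfl : x = y + 1 := by omega
    ring
  · obtain rfl : y = x := by omega
    ring

/-- Clarke–Steingrímsson–Zeng lemma, second equality: for every permutation `σ`
of `{1,…,g}` (modeled on `Fin g`),
`#{(i,j) : i ≤ j < σ(i), σ(j) ≤ j} = #{(i,j) : σ(i) < σ(j) ≤ i, σ(j) ≤ j}`. -/
theorem csz_count_eq_of_le (g : ℕ) (hg : 0 < g) (σ : Equiv.Perm (Fin g)) :
    ((Finset.univ : Finset (Fin g × Fin g)).filter
      (fun p => p.1 ≤ p.2 ∧ p.2 < σ p.1 ∧ σ p.2 ≤ p.2)).card =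
    ((Finset.univ : Finset (Fin g × Fin g)).filter
      (fun p => σ p.1 < σ p.2 ∧ σ p.2 ≤ p.1 ∧ σ p.2 ≤ p.2)).card := by
  rw [Finset.card_filter, Finset.card_filter, Fintype.sum_prod_type, Fintype.sum_prod_type]
  conv_lhs => rw [Finset.sum_comm]
  conv_rhs => rw [Finset.sum_comm]
  dsimp only
  have hL : ∀ j : Fin g,
      (∑ i : Fin g, if i ≤ j ∧ j < σ i ∧ σ j ≤ j then (1:ℕ) else 0)
        = (if σ j ≤ j then 1 else 0) * csz_F σ ((j : ℕ) + 1) := by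
    intro j
    by_cases h : σ j ≤ j
    · rw [if_pos h, one_mul]
      unfold csz_F
      refine Finset.sum_congr rfl fun i _ => ?_
      simp only [Fin.le_def, Fin.lt_def, h, and_true]
      split_ifs <;> omega
    · rw [if_neg h, zero_mul]
      exact Finset.sum_eq_zero fun i _ => by simp [h]
  have hR : ∀ j : Fin g,
      (∑ i : Fin g, if σ i < σ j ∧ σ j ≤ i ∧ σ j ≤ j then (1:ℕ) else 0)
        = (if σ j ≤ j then 1 else 0) * csz_F σ ((σ j : ℕ)) := by
    intro j
    by_cases h : σ j ≤ j
    · rw [if_pos h, one_mul, ← csz_balance σ ((σ j : ℕ))]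
      refine Finset.sum_congr rfl fun i _ => ?_
      simp only [Fin.le_def, Fin.lt_def, h, and_true]
      split_ifs <;> omega
    · rw [if_neg h, zero_mul]
      exact Finset.sum_eq_zero fun i _ => by simp [h]
  rw [Finset.sum_congr rfl fun j _ => hL j, Finset.sum_congr rfl fun j _ => hR j]
  have hre : (∑ j : Fin g, (if σ j ≤ j then 1 else 0) * csz_F σ ((σ j : ℕ)))
      = ∑ k : Fin g, (if k ≤ σ.symm k then 1 else 0) * csz_F σ ((k : ℕ)) := by
    rw [← Equiv.sum_comp σ
      (fun k : Fin g => (if k ≤ σ.symm k then 1 else 0) * csz_F σ ((k : ℕ)))]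
    refine Finset.sum_congr rfl fun j _ => ?_
    rw [Equiv.symm_apply_apply]
  rw [hre]
  have key : ∀ j : Fin g,
      2 * ((if j ≤ σ.symm j then 1 else 0) * csz_F σ ((j : ℕ)))
          + csz_F σ ((j : ℕ)) ^ 2 + csz_F σ ((j : ℕ) + 1)
        = 2 * ((if σ j ≤ j then 1 else 0) * csz_F σ ((j : ℕ) + 1))
          + csz_F σ ((j : ℕ) + 1) ^ 2 + csz_F σ ((j : ℕ)) :=
    fun j => csz_quad (σ j ≤ j) (j ≤ σ.symm j) _ _ (csz_step σ j)
  have hsum := Finset.sum_congr rfl fun j (_ : j ∈ (univ : Finset (Fin g))) => key j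
  simp only [Finset.sum_add_distrib, ← Finset.mul_sum] at hsum
  have h1 := csz_shift σ (fun n => n ^ 2)
  have h2 := csz_shift σ (fun n => n)
  simp only [csz_F_zero, csz_F_top] at h1 h2
  omega
end

section
/- For every positive integer g and every permutation σ of {1,…,g}, one has g(g+1)/2 + 2·(A_σ + A_{σ⁻¹}) − inv(σ) − fix(σ) ≤ ⌊g²/2⌋; equivalently, g(g+1)/2 + 2·(A_σ + A_{σ⁻¹}) ≤ ⌊g²/2⌋ + inv(σ) + fix(σ). -/
open Finset

namespace PrankProof

variable {g : ℕ}

/-- the count of pairs `i < j` with `σ j < σ i < i` (nested "deficiency" pairs). -/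
def APCount (g : ℕ) (σ : Equiv.Perm (Fin g)) : ℕ :=
  ((Finset.univ : Finset (Fin g × Fin g)).filter
    (fun p => p.1 < p.2 ∧ σ p.2 < σ p.1 ∧ σ p.1 < p.1)).card

lemma APCount_eq (σ : Equiv.Perm (Fin g)) : APCount g σ = ACount g σ⁻¹ := by
  classical
  unfold APCount ACount
  apply Finset.card_nbij' (i := fun p => (σ p.2, σ p.1)) (j := fun q => (σ⁻¹ q.2, σ⁻¹ q.1))
  · intro p hp
    simp only [mem_filter, mem_univ, true_and] at hp ⊢
    simp only [Finset.mem_coe, Finset.coe_filter, Set.mem_setOf_eq, Finset.mem_filter, Finset.mem_univ, true_and, Equiv.Perm.coe_inv, Equiv.symm_apply_apply]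
    have hp : p.1 < p.2 ∧ σ p.2 < σ p.1 ∧ σ p.1 < p.1 := by
      simpa using (show p ∈ (Finset.univ : Finset (Fin g × Fin g)).filter (fun p => p.1 < p.2 ∧ σ p.2 < σ p.1 ∧ σ p.1 < p.1) from hp)
    exact ⟨hp.2.1, hp.2.2, hp.1⟩
  · intro q hq
    simp only [mem_filter, mem_univ, true_and] at hq ⊢
    simp only [Finset.mem_coe, Finset.coe_filter, Set.mem_setOf_eq, Finset.mem_filter, Finset.mem_univ, true_and, Equiv.Perm.coe_inv, Equiv.apply_symm_apply]
    have hq : q.1 < q.2 ∧ q.2 < σ⁻¹ q.2 ∧ σ⁻¹ q.2 < σ⁻¹ q.1 := by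
      simpa only [Finset.mem_filter, Finset.mem_univ, true_and] using (show q ∈ (Finset.univ : Finset (Fin g × Fin g)).filter (fun p => p.1 < p.2 ∧ p.2 < σ⁻¹ p.2 ∧ σ⁻¹ p.2 < σ⁻¹ p.1) from hq)
    simp only [Equiv.Perm.coe_inv] at hq
    exact ⟨hq.2.2, hq.1, hq.2.1⟩
  · intro p _; simp
  · intro q _; simp

/-- local integer weight whose double sum is `inv − 2A − 2A'`. -/
def wt (σ : Equiv.Perm (Fin g)) (i j : Fin g) : ℤ :=
  (if i < j ∧ σ j < σ i then 1 else 0)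
  - 2 * (if i < j ∧ j < σ j ∧ σ j < σ i then 1 else 0)
  - 2 * (if i < j ∧ σ j < σ i ∧ σ i < i then 1 else 0)

lemma card_eq_sumZ (P : Fin g × Fin g → Prop) [DecidablePred P] :
    (((Finset.univ : Finset (Fin g × Fin g)).filter P).card : ℤ)
      = ∑ i : Fin g, ∑ j : Fin g, (if P (i, j) then (1 : ℤ) else 0) := by
  rw [Finset.card_filter]
  push_cast
  rw [Fintype.sum_prod_type]

lemma W_eq (σ : Equiv.Perm (Fin g)) :
    ∑ i : Fin g, ∑ j : Fin g, wt σ i j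
      = (invCount g σ : ℤ) - 2 * ACount g σ - 2 * APCount g σ := by
  unfold invCount ACount APCount
  rw [card_eq_sumZ, card_eq_sumZ, card_eq_sumZ]
  simp only [wt, Finset.sum_sub_distrib, Finset.mul_sum]

lemma D_nonneg (σ τ : Equiv.Perm (Fin g)) (b n i : Fin g)
    (hbn : b < n) (hσb : σ b = n) (ha : σ n < n)
    (hmax : ∀ x, n < x → σ x = x)
    (hτb : τ b = σ n) (hτn : τ n = n) (hτi : τ i = σ i)
    (hib : i ≠ b) (hin : i ≠ n) :
    0 ≤ (wt σ i b - wt τ i b) + (wt σ i n - wt τ i n)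
        + (wt σ b i - wt τ b i) + (wt σ n i - wt τ n i) := by
  have hbnv : (b : ℕ) < n := hbn
  have hav : (σ n : ℕ) < n := ha
  have f2 : ¬ ((n : ℕ) < (σ n : ℕ)) := by omega
  have hsltn : ∀ x : Fin g, x < n → x ≠ b → (σ x : ℕ) < n := by
    intro x hx hxb
    have h1 : σ x ≠ n := by
      intro h; exact hxb (σ.injective (h.trans hσb.symm))
    rcases lt_trichotomy ((σ x : ℕ)) ((n : ℕ)) with h | h | h
    · exact h
    · exact absurd (Fin.val_injective h) h1
    · exfalso
      have hfix : σ (σ x) = σ x := hmax _ h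
      have : σ x = x := σ.injective hfix
      rw [this] at h
      exact absurd hx (by exact not_lt.mpr (le_of_lt h))
  rcases lt_trichotomy i b with h1 | h1 | h1
  · -- region R1 : i < b
    have t1 : (i : ℕ) < b := h1
    have t2 : (i : ℕ) < n := lt_trans t1 hbnv
    have t3 : (σ i : ℕ) < n := hsltn i (by exact t2) hib
    have f1 : ¬ ((n : ℕ) < (σ i : ℕ)) := by omega
    have f3 : ¬ ((b : ℕ) < (i : ℕ)) := by omega
    have f4 : ¬ ((n : ℕ) < (i : ℕ)) := by omega
    simp only [wt, hτb, hτn, hτi, hσb, Fin.lt_def]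
    simp only [t1, t2, t3, f1, f2, f3, f4, lt_self_iff_false, true_and, and_true,
      false_and, and_false, if_true, if_false, mul_zero, sub_zero, zero_sub, mul_one]
    split_ifs <;> omega
  · exact absurd h1 hib
  · rcases lt_trichotomy i n with h2 | h2 | h2
    · -- region R2 : b < i < n
      have t1 : (b : ℕ) < i := h1
      have t2 : (i : ℕ) < n := h2
      have t3 : (σ i : ℕ) < n := hsltn i h2 hib
      have f1 : ¬ ((n : ℕ) < (σ i : ℕ)) := by omega
      have f3 : ¬ ((i : ℕ) < (b : ℕ)) := by omega
      have f4 : ¬ ((n : ℕ) < (i : ℕ)) := by omega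
      have f5 : ¬ ((n : ℕ) < (b : ℕ)) := by omega
      have hne2 : (σ i : ℕ) ≠ (σ n : ℕ) :=
        fun h => hin (σ.injective (Fin.val_injective h))
      simp only [wt, hτb, hτn, hτi, hσb, Fin.lt_def]
      simp only [t1, t2, t3, f1, f2, f3, f4, f5, lt_self_iff_false, true_and, and_true,
        false_and, and_false, if_true, if_false, mul_zero, sub_zero, zero_sub, mul_one]
      split_ifs <;> omega
    · exact absurd h2 hin
    · -- region R3 : n < i
      have t1 : (n : ℕ) < i := h2
      have hfix : σ i = i := hmax i h2
      have f3 : ¬ ((i : ℕ) < (b : ℕ)) := by omega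
      have f4 : ¬ ((i : ℕ) < (n : ℕ)) := by omega
      have f5 : ¬ ((i : ℕ) < (σ n : ℕ)) := by omega
      simp only [wt, hτb, hτn, hτi, hfix, hσb, Fin.lt_def]
      simp only [f3, f4, f5, lt_self_iff_false, true_and, and_true,
        false_and, and_false, if_true, if_false, mul_zero, sub_zero, zero_sub, mul_one]
      norm_num

lemma corner (σ τ : Equiv.Perm (Fin g)) (b n : Fin g)
    (hbn : b < n) (hσb : σ b = n) (ha : σ n < n)
    (hτb : τ b = σ n) (hτn : τ n = n) :
    (wt σ b b - wt τ b b) + (wt σ b n - wt τ b n)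
      + (wt σ n b - wt τ n b) + (wt σ n n - wt τ n n) = 1 := by
  have hbnv : (b : ℕ) < n := hbn
  have hav : (σ n : ℕ) < n := ha
  have f2 : ¬ ((n : ℕ) < (σ n : ℕ)) := by omega
  have f3 : ¬ ((n : ℕ) < (b : ℕ)) := by omega
  simp only [wt, hτb, hτn, hσb, Fin.lt_def]
  simp only [hbnv, hav, f2, f3, lt_self_iff_false, true_and, and_true,
    false_and, and_false, if_true, if_false, mul_zero, sub_zero, zero_sub, mul_one]
  norm_num

lemma step (σ : Equiv.Perm (Fin g)) (b n : Fin g)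
    (hbn : b < n) (hσb : σ b = n) (ha : σ n < n)
    (hmax : ∀ x, n < x → σ x = x) :
    1 ≤ ∑ i : Fin g, ∑ j : Fin g, (wt σ i j - wt (σ * Equiv.swap b n) i j) := by
  set τ := σ * Equiv.swap b n with hτ
  have hτb : τ b = σ n := by
    rw [hτ]; simp [Equiv.Perm.mul_apply]
  have hτn : τ n = n := by
    rw [hτ]; simp [Equiv.Perm.mul_apply, hσb]
  have hτo : ∀ x : Fin g, x ≠ b → x ≠ n → τ x = σ x := by
    intro x hx1 hx2
    rw [hτ]; simp [Equiv.Perm.mul_apply, Equiv.swap_apply_of_ne_of_ne hx1 hx2]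
  have hbne : b ≠ n := ne_of_lt hbn
  have hFzero : ∀ i j : Fin g, i ≠ b → i ≠ n → j ≠ b → j ≠ n →
      wt σ i j - wt τ i j = 0 := by
    intro i j hi1 hi2 hj1 hj2
    simp only [wt, hτo i hi1 hi2, hτo j hj1 hj2, sub_self]
  have keysum : ∀ H : Fin g → ℤ,
      (∑ x, H x) = (∑ x ∈ univ \ {b, n}, H x) + (H b + H n) := by
    intro H
    rw [← Finset.sum_sdiff (Finset.subset_univ ({b, n} : Finset (Fin g))),
      Finset.sum_pair hbne]
  have hmem : ∀ x : Fin g, x ∈ univ \ {b, n} → x ≠ b ∧ x ≠ n := by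
    intro x hx
    simp only [Finset.mem_sdiff, Finset.mem_insert, Finset.mem_singleton, not_or] at hx
    exact hx.2
  have hrow : ∀ i : Fin g, i ≠ b → i ≠ n →
      (∑ j, (wt σ i j - wt τ i j)) = (wt σ i b - wt τ i b) + (wt σ i n - wt τ i n) := by
    intro i h1 h2
    rw [keysum (fun j => wt σ i j - wt τ i j)]
    rw [Finset.sum_eq_zero (fun j hj => hFzero i j h1 h2 (hmem j hj).1 (hmem j hj).2)]
    ring
  rw [keysum (fun i => ∑ j, (wt σ i j - wt τ i j))]
  rw [keysum (fun j => wt σ b j - wt τ b j), keysum (fun j => wt σ n j - wt τ n j)]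
  rw [Finset.sum_congr rfl (fun i hi => hrow i (hmem i hi).1 (hmem i hi).2)]
  have hcomb : (∑ i ∈ univ \ {b, n}, ((wt σ i b - wt τ i b) + (wt σ i n - wt τ i n)))
      + (∑ j ∈ univ \ {b, n}, (wt σ b j - wt τ b j))
      + (∑ j ∈ univ \ {b, n}, (wt σ n j - wt τ n j))
      = ∑ i ∈ univ \ {b, n}, ((wt σ i b - wt τ i b) + (wt σ i n - wt τ i n)
          + (wt σ b i - wt τ b i) + (wt σ n i - wt τ n i)) := by
    rw [← Finset.sum_add_distrib, ← Finset.sum_add_distrib]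
  have hpos : 0 ≤ ∑ i ∈ univ \ {b, n}, ((wt σ i b - wt τ i b) + (wt σ i n - wt τ i n)
      + (wt σ b i - wt τ b i) + (wt σ n i - wt τ n i)) :=
    Finset.sum_nonneg (fun i hi =>
      D_nonneg σ τ b n i hbn hσb ha hmax hτb hτn (hτo i (hmem i hi).1 (hmem i hi).2)
        (hmem i hi).1 (hmem i hi).2)
  have hcor := corner σ τ b n hbn hσb ha hτb hτn
  linarith [hcomb, hpos, hcor]

lemma base (σ : Equiv.Perm (Fin g)) (hσ : ∀ x : Fin g, σ x = x) :
    2 * ACount g σ + 2 * APCount g σ + (g + 1) / 2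
      ≤ invCount g σ + (fixCount g σ + 1) / 2 := by
  have h1 : invCount g σ = 0 := by
    unfold invCount
    rw [Finset.card_eq_zero, Finset.filter_eq_empty_iff]
    intro p _
    simp only [hσ, Fin.lt_def, not_and]
    omega
  have h2 : ACount g σ = 0 := by
    unfold ACount
    rw [Finset.card_eq_zero, Finset.filter_eq_empty_iff]
    intro p _
    simp only [hσ, Fin.lt_def, not_and]
    omega
  have h3 : APCount g σ = 0 := by
    unfold APCount
    rw [Finset.card_eq_zero, Finset.filter_eq_empty_iff]
    intro p _
    simp only [hσ, Fin.lt_def, not_and]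
    omega
  have h4 : fixCount g σ = g := by
    unfold fixCount
    rw [Finset.filter_true_of_mem (fun x _ => hσ x), Finset.card_univ, Fintype.card_fin]
  rw [h1, h2, h3, h4]

lemma key (σ : Equiv.Perm (Fin g)) :
    2 * ACount g σ + 2 * APCount g σ + (g + 1) / 2
      ≤ invCount g σ + (fixCount g σ + 1) / 2 := by
  classical
  suffices H : ∀ (k : ℕ) (σ : Equiv.Perm (Fin g)),
      ((univ.filter fun x => σ x ≠ x).card ≤ k) →
      2 * ACount g σ + 2 * APCount g σ + (g + 1) / 2
        ≤ invCount g σ + (fixCount g σ + 1) / 2 by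
    exact H _ σ le_rfl
  intro k
  induction k with
  | zero =>
    intro σ hk
    apply base
    intro x
    by_contra hc
    have : x ∈ univ.filter fun x => σ x ≠ x := by simp [hc]
    have := Finset.card_pos.mpr ⟨x, this⟩
    omega
  | succ k IH =>
    intro σ hk
    by_cases hσ : ∀ x : Fin g, σ x = x
    · exact base σ hσ
    · push_neg at hσ
      obtain ⟨x₀, hx₀⟩ := hσ
      have hne : (univ.filter fun x => σ x ≠ x).Nonempty := ⟨x₀, by simp [hx₀]⟩
      set n := (univ.filter fun x => σ x ≠ x).max' hne with hn
      have hnmem : n ∈ univ.filter fun x => σ x ≠ x := Finset.max'_mem _ hne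
      have hnfix : σ n ≠ n := by
        simpa using (Finset.mem_filter.mp hnmem).2
      have hmax : ∀ x, n < x → σ x = x := by
        intro x hx
        by_contra hc
        exact absurd (Finset.le_max' _ x (by simp [hc])) (not_le.mpr hx)
      have ha : σ n < n := by
        rcases lt_trichotomy (σ n) n with h | h | h
        · exact h
        · exact absurd h hnfix
        · exfalso
          have := σ.injective (hmax _ h)
          exact hnfix this
      set b := σ⁻¹ n with hbdef
      have hσb : σ b = n := Equiv.apply_symm_apply σ n
      have hbn : b < n := by
        have hbnen : b ≠ n := by
          intro h
          rw [h] at hσb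
          exact hnfix hσb
        rcases lt_trichotomy b n with h | h | h
        · exact h
        · exact absurd h hbnen
        · exfalso
          have := hmax b h
          rw [hσb] at this
          exact hbnen this.symm
      set τ := σ * Equiv.swap b n with hτdef
      have hτn : τ n = n := by
        rw [hτdef]; simp [Equiv.Perm.mul_apply, hσb]
      have hτo : ∀ x : Fin g, x ≠ b → x ≠ n → τ x = σ x := by
        intro x hx1 hx2
        rw [hτdef]; simp [Equiv.Perm.mul_apply, Equiv.swap_apply_of_ne_of_ne hx1 hx2]
      -- measure decreases
      have hsub : (univ.filter fun x => τ x ≠ x) ⊆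
          (univ.filter fun x => σ x ≠ x).erase n := by
        intro x hx
        have hx' : τ x ≠ x := by simpa using (Finset.mem_filter.mp hx).2
        have hxn : x ≠ n := by
          intro h; rw [h, hτn] at hx'; exact hx' rfl
        rw [Finset.mem_erase]
        refine ⟨hxn, ?_⟩
        simp only [Finset.mem_filter, Finset.mem_univ, true_and]
        by_cases hxb : x = b
        · rw [hxb, hσb]
          intro h
          rw [← h] at hbn
          exact absurd hbn (lt_irrefl _)
        · rw [← hτo x hxb hxn]
          exact hx'
      have hcard : (univ.filter fun x => τ x ≠ x).card ≤ k := by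
        have h1 := Finset.card_le_card hsub
        have h2 : ((univ.filter fun x => σ x ≠ x).erase n).card
            = (univ.filter fun x => σ x ≠ x).card - 1 :=
          Finset.card_erase_of_mem hnmem
        have h3 : 1 ≤ (univ.filter fun x => σ x ≠ x).card :=
          Finset.card_pos.mpr hne
        omega
      have hIH := IH τ hcard
      -- fixed points bound
      have hfixb : fixCount g τ ≤ fixCount g σ + 2 := by
        unfold fixCount
        have hsub2 : (univ.filter fun x : Fin g => τ x = x) ⊆
            (univ.filter fun x : Fin g => σ x = x) ∪ {b, n} := by
          intro x hx
          have hx' : τ x = x := by simpa using (Finset.mem_filter.mp hx).2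
          by_cases hxb : x = b
          · exact Finset.mem_union_right _ (by simp [hxb])
          · by_cases hxn : x = n
            · exact Finset.mem_union_right _ (by simp [hxn])
            · apply Finset.mem_union_left
              simp only [Finset.mem_filter, Finset.mem_univ, true_and]
              rw [← hτo x hxb hxn]
              exact hx'
        have h1 := Finset.card_le_card hsub2
        have h2 := Finset.card_union_le (univ.filter fun x : Fin g => σ x = x)
          ({b, n} : Finset (Fin g))
        have h3 : ({b, n} : Finset (Fin g)).card ≤ 2 :=
          Finset.card_insert_le _ _ |>.trans (by simp)
        omega
      -- the step inequality, in ℤ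
      have hstep := step σ b n hbn hσb ha hmax
      have hWσ := W_eq σ
      have hWτ := W_eq τ
      have hsplit : ∑ i : Fin g, ∑ j : Fin g, (wt σ i j - wt τ i j)
          = (∑ i : Fin g, ∑ j : Fin g, wt σ i j)
            - (∑ i : Fin g, ∑ j : Fin g, wt τ i j) := by
        simp [Finset.sum_sub_distrib]
      rw [hτdef] at hIH hfixb
      rw [hτdef] at hWτ
      have hZ : (invCount g (σ * Equiv.swap b n) : ℤ)
          - 2 * ACount g (σ * Equiv.swap b n) - 2 * APCount g (σ * Equiv.swap b n) + 1
          ≤ (invCount g σ : ℤ) - 2 * ACount g σ - 2 * APCount g σ := by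
        rw [hsplit] at hstep
        rw [W_eq, W_eq] at hstep
        linarith
      omega

end PrankProof

/-- For every permutation `σ` of `{1,…,g}`,
`g(g+1)/2 + 2·(A_σ + A_{σ⁻¹}) − inv(σ) − fix(σ) ≤ ⌊g²/2⌋`. -/
theorem length_prank_zero_le (g : ℕ) (hg : 0 < g) (σ : Equiv.Perm (Fin g)) :
    ((g * (g + 1) / 2 : ℕ) : ℤ) + 2 * ((ACount g σ : ℤ) + (ACount g σ⁻¹ : ℤ))
      - invCount g σ - fixCount g σ ≤ ((g ^ 2 / 2 : ℕ) : ℤ) := by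
  have hkey := PrankProof.key σ
  rw [PrankProof.APCount_eq] at hkey
  have hsq : g ^ 2 = g * g := sq g
  have hpar : g * g % 2 = g % 2 := by
    rcases Nat.mod_two_eq_zero_or_one g with h2 | h2 <;>
      simp [Nat.mul_mod, h2]
  have hmul : g * (g + 1) = g * g + g := by ring
  have hgg : g * (g + 1) / 2 = g ^ 2 / 2 + (g + 1) / 2 := by
    rw [hsq, hmul]
    omega
  omega
end

section
/- For every positive integer g, the maximum over all permutations σ of {1,…,g} of the quantity g(g+1)/2 + 2·(A_σ + A_{σ⁻¹}) − inv(σ) − fix(σ) equals ⌊g²/2⌋. -/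
open Finset

/-- sign of a pair `(u,v)` with `u < v` intended: `+1` for a "mixed" inversion,
`-1` for a "nested" inversion, `0` otherwise. -/
def chiZ (f : ℕ → ℕ) (u v : ℕ) : ℤ :=
  if f v < f u then (if v < f v ∨ f u < u then -1 else 1) else 0

def GZ (f : ℕ → ℕ) (u v : ℕ) : ℤ := if u < v then chiZ f u v else 0

def fixZ (S : Finset ℕ) (f : ℕ → ℕ) : ℤ := ∑ k ∈ S, (if f k = k then (1:ℤ) else 0)

def EZ (S : Finset ℕ) (f : ℕ → ℕ) : ℤ := fixZ S f + ∑ u ∈ S, ∑ v ∈ S, GZ f u v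

lemma key_pt (f f' : ℕ → ℕ) (x a b v : ℕ) (hfx : f x = b) (hfa : f a = x)
    (hf'a : f' a = b) (hf'v : f' v = f v)
    (hvx : v < x) (hax : a < x) (hbx : b < x) (hwx : f v < x) (hwb : f v ≠ b) (hva : v ≠ a) :
    0 ≤ GZ f v x + (GZ f a v - GZ f' a v) + (GZ f v a - GZ f' v a) := by
  simp only [GZ, chiZ, hfx, hfa, hf'a, hf'v]
  split_ifs <;> omega

lemma key_a (f : ℕ → ℕ) (x a b : ℕ) (hfx : f x = b) (hfa : f a = x)
    (hax : a < x) (hbx : b < x) : GZ f a x = 1 := by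
  simp only [GZ, chiZ, hfx, hfa]
  split_ifs <;> omega

lemma ux_nonneg (f : ℕ → ℕ) (x u : ℕ) (hfx : f x = x) : 0 ≤ GZ f u x := by
  simp only [GZ, chiZ, hfx]
  split_ifs <;> omega

lemma sum2_diff (S : Finset ℕ) (a : ℕ) (ha : a ∈ S) (d : ℕ → ℕ → ℤ)
    (h0 : ∀ u ∈ S, ∀ v ∈ S, u ≠ a → v ≠ a → d u v = 0) (haa : d a a = 0) :
    ∑ u ∈ S, ∑ v ∈ S, d u v = ∑ v ∈ S, d a v + ∑ u ∈ S, d u a := by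
  have step : ∀ u ∈ S, u ≠ a → ∑ v ∈ S, d u v = d u a := by
    intro u hu hua
    exact Finset.sum_eq_single_of_mem a ha (fun v hv hva => h0 u hu v hv hua hva)
  calc ∑ u ∈ S, ∑ v ∈ S, d u v
      = ∑ u ∈ S, (if u = a then ∑ v ∈ S, d a v else d u a) := by
        refine Finset.sum_congr rfl (fun u hu => ?_)
        by_cases h : u = a
        · subst h; rw [if_pos rfl]
        · rw [if_neg h, step u hu h]
    _ = ∑ v ∈ S, d a v + ∑ u ∈ S, d u a := by
        rw [← Finset.sum_erase_add S _ ha, if_pos rfl]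
        have h2 : ∑ u ∈ S.erase a, (if u = a then ∑ v ∈ S, d a v else d u a)
            = ∑ u ∈ S.erase a, d u a := by
          refine Finset.sum_congr rfl (fun u hu => ?_)
          rw [if_neg (Finset.ne_of_mem_erase hu)]
        rw [h2, Finset.sum_erase_eq_sub ha, haa]
        ring

lemma fixZ_nonneg (S : Finset ℕ) (f : ℕ → ℕ) : 0 ≤ fixZ S f := by
  refine Finset.sum_nonneg (fun k _ => ?_)
  split_ifs <;> norm_num

lemma EZ_split (S : Finset ℕ) (x : ℕ) (hx : x ∈ S) (hmax : ∀ u ∈ S, u ≤ x) (f : ℕ → ℕ) :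
    ∑ u ∈ S, ∑ v ∈ S, GZ f u v
      = (∑ u ∈ S.erase x, ∑ v ∈ S.erase x, GZ f u v) + ∑ u ∈ S.erase x, GZ f u x := by
  have hins : S = insert x (S.erase x) := (Finset.insert_erase hx).symm
  have hnm : x ∉ S.erase x := Finset.notMem_erase x S
  have hGx : ∀ v ∈ S.erase x, GZ f x v = 0 := by
    intro v hv
    have hvx : v < x := lt_of_le_of_ne (hmax v (Finset.mem_of_mem_erase hv))
      (Finset.ne_of_mem_erase hv)
    simp [GZ, Nat.not_lt.mpr (le_of_lt hvx)]
  conv_lhs => rw [hins]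
  rw [Finset.sum_insert hnm]
  have h1 : ∑ v ∈ insert x (S.erase x), GZ f x v = 0 := by
    rw [Finset.sum_insert hnm]
    rw [Finset.sum_eq_zero hGx]
    simp [GZ]
  rw [h1]
  have h2 : ∀ u ∈ S.erase x, ∑ v ∈ insert x (S.erase x), GZ f u v
      = GZ f u x + ∑ v ∈ S.erase x, GZ f u v := fun u _ => Finset.sum_insert hnm
  rw [Finset.sum_congr rfl h2, Finset.sum_add_distrib]
  ring

lemma master (n : ℕ) : ∀ (S : Finset ℕ) (f : ℕ → ℕ), S.card = n →
    (∀ x ∈ S, f x ∈ S) → (∀ x ∈ S, ∀ y ∈ S, f x = f y → x = y) →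
    (S.card : ℤ) + fixZ S f ≤ 2 * EZ S f := by
  induction n using Nat.strong_induction_on with
  | _ n IH =>
  intro S f hcard hmap hinj
  rcases Finset.eq_empty_or_nonempty S with rfl | hne
  · simp [EZ, fixZ]
  set x := S.max' hne with hxdef
  have hxS : x ∈ S := S.max'_mem hne
  have hmax : ∀ u ∈ S, u ≤ x := fun u hu => S.le_max' u hu
  set S' := S.erase x with hS'def
  have hcard' : S'.card = S.card - 1 := Finset.card_erase_of_mem hxS
  have hcardlt : S'.card < n := by
    have : 0 < S.card := Finset.card_pos.mpr hne
    omega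
  have hmemS' : ∀ u, u ∈ S' ↔ (u ∈ S ∧ u ≠ x) := by
    intro u; rw [Finset.mem_erase]; tauto
  by_cases hfix : f x = x
  -- Case 1 : x is a fixed point
  · have hmap' : ∀ u ∈ S', f u ∈ S' := by
      intro u hu
      rw [hmemS'] at hu ⊢
      refine ⟨hmap u hu.1, fun h => hu.2 (hinj u hu.1 x hxS (h.trans hfix.symm))⟩
    have hinj' : ∀ u ∈ S', ∀ v ∈ S', f u = f v → u = v := fun u hu v hv =>
      hinj u (Finset.mem_of_mem_erase hu) v (Finset.mem_of_mem_erase hv)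
    have hIH := IH S'.card hcardlt S' f rfl hmap' hinj'
    have hfixsplit : fixZ S f = fixZ S' f + 1 := by
      rw [fixZ, ← Finset.sum_erase_add S _ hxS, if_pos hfix]; rfl
    have hEsplit := EZ_split S x hxS hmax f
    rw [← hS'def] at hEsplit
    have hpos : 0 ≤ ∑ u ∈ S', GZ f u x :=
      Finset.sum_nonneg (fun u _ => ux_nonneg f x u hfix)
    rw [EZ] at hIH ⊢
    rw [hEsplit, hfixsplit]
    push_cast [hcard'] at *
    have hc : 0 < S.card := Finset.card_pos.mpr hne
    omega
  -- Case 2 : x is not fixed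
  · -- find the preimage a of x
    have himg : S.image f = S := by
      apply Finset.eq_of_subset_of_card_le
      · intro y hy
        obtain ⟨u, hu, rfl⟩ := Finset.mem_image.mp hy
        exact hmap u hu
      · rw [Finset.card_image_of_injOn (fun u hu v hv => hinj u hu v hv)]
    obtain ⟨a, haS, hfa⟩ := Finset.mem_image.mp (himg ▸ hxS)
    set b := f x with hbdef
    have hbS : b ∈ S := hmap x hxS
    have hax : a ≠ x := by rintro rfl; exact hfix hfa
    have hbx : b ≠ x := fun h => hfix h
    have haltx : a < x := lt_of_le_of_ne (hmax a haS) hax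
    have hbltx : b < x := lt_of_le_of_ne (hmax b hbS) hbx
    have haS' : a ∈ S' := (hmemS' a).mpr ⟨haS, hax⟩
    set f' : ℕ → ℕ := fun t => if t = a then b else f t with hf'def
    have hf'a : f' a = b := by simp [hf'def]
    have hf'other : ∀ t, t ≠ a → f' t = f t := by
      intro t ht; simp [hf'def, ht]
    have hmap' : ∀ u ∈ S', f' u ∈ S' := by
      intro u hu
      rw [hmemS'] at hu ⊢
      by_cases h : u = a
      · subst h; rw [hf'a]; exact ⟨hbS, hbx⟩
      · rw [hf'other u h]
        refine ⟨hmap u hu.1, fun hfux => ?_⟩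
        exact h (hinj u hu.1 a haS (hfux.trans hfa.symm))
    have hinj' : ∀ u ∈ S', ∀ v ∈ S', f' u = f' v → u = v := by
      intro u hu v hv huv
      rw [hmemS'] at hu hv
      by_cases h1 : u = a <;> by_cases h2 : v = a
      · rw [h1, h2]
      · rw [h1, hf'a, hf'other v h2] at huv
        exact absurd (hinj x hxS v hv.1 huv) (Ne.symm hv.2)
      · rw [h2, hf'a, hf'other u h1] at huv
        rw [hbdef] at huv
        exact absurd (hinj u hu.1 x hxS huv) hu.2
      · rw [hf'other u h1, hf'other v h2] at huv
        exact hinj u hu.1 v hv.1 huv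
    have hIH := IH S'.card hcardlt S' f' rfl hmap' hinj'
    -- fixed points : fixZ S f = fixZ S' f' - [a = b]
    have hfix1 : fixZ S f = fixZ S' f := by
      rw [fixZ, ← Finset.sum_erase_add S _ hxS, if_neg hfix, add_zero]; rfl
    have hfix2 : fixZ S' f' = fixZ S' f + (if b = a then 1 else 0) := by
      rw [fixZ, fixZ, ← Finset.sum_erase_add _ _ haS', ← Finset.sum_erase_add S' _ haS']
      have : ∑ k ∈ S'.erase a, (if f' k = k then (1:ℤ) else 0)
          = ∑ k ∈ S'.erase a, (if f k = k then (1:ℤ) else 0) := by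
        refine Finset.sum_congr rfl (fun k hk => ?_)
        rw [hf'other k (Finset.ne_of_mem_erase hk)]
      rw [this, hf'a, hfa]
      have hfaa : (if x = a then (1:ℤ) else 0) = 0 := by
        rw [if_neg (Ne.symm hax)]
      rw [hfaa]
      ring
    -- pair sums
    have hEsplit := EZ_split S x hxS hmax f
    rw [← hS'def] at hEsplit
    have hdiff : ∑ u ∈ S', ∑ v ∈ S', GZ f u v - ∑ u ∈ S', ∑ v ∈ S', GZ f' u v
        = ∑ v ∈ S', (GZ f a v - GZ f' a v) + ∑ u ∈ S', (GZ f u a - GZ f' u a) := by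
      rw [← Finset.sum_sub_distrib]
      have : ∀ u ∈ S', (∑ v ∈ S', GZ f u v) - (∑ v ∈ S', GZ f' u v)
          = ∑ v ∈ S', (GZ f u v - GZ f' u v) := fun u _ => (Finset.sum_sub_distrib _ _).symm
      rw [Finset.sum_congr rfl this]
      exact sum2_diff S' a haS' (fun u v => GZ f u v - GZ f' u v)
        (fun u _ v _ hu hv => by simp only [GZ, chiZ, hf'other u hu, hf'other v hv]; ring)
        (by simp [GZ, lt_irrefl])
    -- the key lower bound
    have hkey : 1 ≤ ∑ v ∈ S', (GZ f v x + ((GZ f a v - GZ f' a v) + (GZ f v a - GZ f' v a))) := by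
      have hterm : ∀ v ∈ S', 0 ≤ GZ f v x + ((GZ f a v - GZ f' a v) + (GZ f v a - GZ f' v a)) := by
        intro v hv
        rw [hmemS'] at hv
        by_cases hva : v = a
        · rw [hva]
          have h1 : GZ f a x = 1 := key_a f x a b hbdef.symm hfa haltx hbltx
          have h2 : GZ f a a = 0 := by simp [GZ, lt_irrefl]
          have h3 : GZ f' a a = 0 := by simp [GZ, lt_irrefl]
          rw [h1, h2, h3]; norm_num
        · have hvx : v < x := lt_of_le_of_ne (hmax v hv.1) hv.2
          have hwx : f v < x := by
            have h1 : f v ∈ S := hmap v hv.1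
            have h2 : f v ≠ x := fun h => hva (hinj v hv.1 a haS (h.trans hfa.symm))
            exact lt_of_le_of_ne (hmax _ h1) h2
          have hwb : f v ≠ b := fun h => hv.2 (hinj v hv.1 x hxS (h.trans hbdef))
          have := key_pt f f' x a b v hbdef.symm hfa hf'a (hf'other v hva)
            hvx haltx hbltx hwx hwb hva
          linarith
      have ha1 : GZ f a x + ((GZ f a a - GZ f' a a) + (GZ f a a - GZ f' a a)) = 1 := by
        have h1 : GZ f a x = 1 := key_a f x a b hbdef.symm hfa haltx hbltx
        have h2 : GZ f a a = 0 := by simp [GZ, lt_irrefl]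
        have h3 : GZ f' a a = 0 := by simp [GZ, lt_irrefl]
        rw [h1, h2, h3]; norm_num
      calc (1:ℤ) = GZ f a x + ((GZ f a a - GZ f' a a) + (GZ f a a - GZ f' a a)) := ha1.symm
        _ ≤ _ := Finset.single_le_sum hterm haS'
    -- assemble
    rw [EZ] at hIH ⊢
    rw [hEsplit, hfix1]
    rw [Finset.sum_add_distrib, Finset.sum_add_distrib] at hkey
    have hGva : ∑ v ∈ S', (GZ f v a - GZ f' v a) = ∑ u ∈ S', (GZ f u a - GZ f' u a) := rfl
    push_cast [hcard'] at *
    have hc : 0 < S.card := Finset.card_pos.mpr hne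
    rcases (em (b = a)) with hba | hba
    · rw [if_pos hba] at hfix2
      omega
    · rw [if_neg hba] at hfix2
      omega

/-- `L`-count: inversions `(u,v)` with `σ u < u`. -/
def LCount (g : ℕ) (σ : Equiv.Perm (Fin g)) : ℕ :=
  ((Finset.univ : Finset (Fin g × Fin g)).filter
    (fun p => p.1 < p.2 ∧ σ p.2 < σ p.1 ∧ σ p.1 < p.1)).card

lemma LCount_eq (g : ℕ) (σ : Equiv.Perm (Fin g)) : LCount g σ = ACount g σ⁻¹ := by
  unfold LCount ACount
  apply Finset.card_bij (fun p _ => (σ p.2, σ p.1))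
  · intro p hp
    simp only [Finset.mem_filter, Finset.mem_univ, true_and,
      Equiv.Perm.inv_def, Equiv.symm_apply_apply] at hp ⊢
    exact ⟨hp.2.1, hp.2.2, hp.1⟩
  · intro p hp q hq h
    simp only [Prod.mk.injEq] at h
    have h1 : p.2 = q.2 := σ.injective h.1
    have h2 : p.1 = q.1 := σ.injective h.2
    exact Prod.ext h2 h1
  · intro q hq
    simp only [Finset.mem_filter, Finset.mem_univ, true_and] at hq
    refine ⟨(σ⁻¹ q.2, σ⁻¹ q.1), ?_, ?_⟩
    · simp only [Finset.mem_filter, Finset.mem_univ, true_and,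
        Equiv.Perm.inv_def, Equiv.apply_symm_apply]
      exact ⟨hq.2.2, hq.1, hq.2.1⟩
    · simp [Equiv.Perm.inv_def, Equiv.apply_symm_apply]

def FofPerm (g : ℕ) (σ : Equiv.Perm (Fin g)) : ℕ → ℕ :=
  fun n => if h : n < g then ((σ ⟨n, h⟩ : Fin g) : ℕ) else n

lemma FofPerm_val (g : ℕ) (σ : Equiv.Perm (Fin g)) (i : Fin g) :
    FofPerm g σ i.val = (σ i).val := by
  simp [FofPerm, i.isLt]

lemma pt_identity (g : ℕ) (σ : Equiv.Perm (Fin g)) (u v : Fin g) :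
    GZ (FofPerm g σ) u.val v.val
      = (if u < v ∧ σ v < σ u then (1:ℤ) else 0)
        - 2 * (if u < v ∧ v < σ v ∧ σ v < σ u then (1:ℤ) else 0)
        - 2 * (if u < v ∧ σ v < σ u ∧ σ u < u then (1:ℤ) else 0) := by
  simp only [GZ, chiZ, FofPerm_val, Fin.lt_def]
  split_ifs <;> omega

lemma sum_transfer (g : ℕ) (σ : Equiv.Perm (Fin g)) :
    ∑ u ∈ Finset.range g, ∑ v ∈ Finset.range g, GZ (FofPerm g σ) u v
      = (invCount g σ : ℤ) - 2 * (ACount g σ : ℤ) - 2 * (LCount g σ : ℤ) := by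
  have h1 : ∑ u ∈ Finset.range g, ∑ v ∈ Finset.range g, GZ (FofPerm g σ) u v
      = ∑ u : Fin g, ∑ v : Fin g, GZ (FofPerm g σ) u.val v.val := by
    rw [← Fin.sum_univ_eq_sum_range (fun u => ∑ v ∈ Finset.range g, GZ (FofPerm g σ) u v)]
    refine Finset.sum_congr rfl (fun u _ => ?_)
    rw [← Fin.sum_univ_eq_sum_range (fun v => GZ (FofPerm g σ) u.val v)]
  rw [h1]
  have h2 : ∀ (P : Fin g × Fin g → Prop) [DecidablePred P],
      ((Finset.univ : Finset (Fin g × Fin g)).filter P).card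
        = ∑ u : Fin g, ∑ v : Fin g, (if P (u, v) then (1:ℤ) else 0) := by
    intro P _
    rw [Finset.card_filter]
    rw [← Finset.univ_product_univ, Finset.sum_product]
    push_cast
    rfl
  unfold invCount ACount LCount
  rw [h2, h2, h2]
  simp only [Finset.mul_sum, ← Finset.sum_sub_distrib]
  refine Finset.sum_congr rfl (fun u _ => ?_)
  refine Finset.sum_congr rfl (fun v _ => ?_)
  exact pt_identity g σ u v

lemma fix_transfer (g : ℕ) (σ : Equiv.Perm (Fin g)) :
    fixZ (Finset.range g) (FofPerm g σ) = (fixCount g σ : ℤ) := by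
  unfold fixZ fixCount
  rw [Finset.card_filter]
  rw [← Fin.sum_univ_eq_sum_range (fun k => if FofPerm g σ k = k then (1:ℤ) else 0)]
  push_cast
  refine Finset.sum_congr rfl (fun i _ => ?_)
  congr 1
  simp [FofPerm_val, Fin.val_inj]

lemma main_bound (g : ℕ) (σ : Equiv.Perm (Fin g)) :
    (g : ℤ) ≤ 2 * ((invCount g σ : ℤ) + (fixCount g σ : ℤ)
      - 2 * (ACount g σ : ℤ) - 2 * (ACount g σ⁻¹ : ℤ)) := by
  have hmap : ∀ k ∈ Finset.range g, FofPerm g σ k ∈ Finset.range g := by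
    intro k hk
    rw [Finset.mem_range] at hk ⊢
    simpa [FofPerm, hk] using (σ ⟨k, hk⟩).isLt
  have hinj : ∀ k ∈ Finset.range g, ∀ l ∈ Finset.range g,
      FofPerm g σ k = FofPerm g σ l → k = l := by
    intro k hk l hl h
    rw [Finset.mem_range] at hk hl
    simp only [FofPerm, dif_pos hk, dif_pos hl] at h
    have := σ.injective (Fin.ext h)
    exact congrArg Fin.val this
  have hm := master g (Finset.range g) (FofPerm g σ) (Finset.card_range g) hmap hinj
  rw [EZ, sum_transfer, fix_transfer, LCount_eq, Finset.card_range] at hm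
  have hfix0 : (0:ℤ) ≤ (fixCount g σ : ℤ) := by positivity
  linarith

def pfn (g k : ℕ) : ℕ := if k % 2 = 0 then (if k + 1 < g then k + 1 else k) else k - 1

lemma pfn_lt (g k : ℕ) (hk : k < g) : pfn g k < g := by
  unfold pfn; split_ifs <;> omega

lemma pfn_invol (g k : ℕ) (hk : k < g) : pfn g (pfn g k) = k := by
  simp only [pfn]; split_ifs <;> omega

def wperm (g : ℕ) : Equiv.Perm (Fin g) :=
  ⟨fun i => ⟨pfn g i.val, pfn_lt g i.val i.isLt⟩,
   fun i => ⟨pfn g i.val, pfn_lt g i.val i.isLt⟩,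
   fun i => Fin.ext (pfn_invol g i.val i.isLt),
   fun i => Fin.ext (pfn_invol g i.val i.isLt)⟩

lemma wperm_apply (g : ℕ) (i : Fin g) : ((wperm g) i).val = pfn g i.val := rfl

lemma wperm_inv (g : ℕ) : (wperm g)⁻¹ = wperm g := rfl

lemma ACount_wperm (g : ℕ) : ACount g (wperm g) = 0 := by
  unfold ACount
  rw [Finset.card_eq_zero, Finset.filter_eq_empty_iff]
  intro p _
  rintro ⟨h1, h2, h3⟩
  rw [Fin.lt_def] at h1 h2 h3
  rw [wperm_apply, wperm_apply] at *
  have e1 := p.1.isLt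
  have e2 := p.2.isLt
  revert h1 h2 h3
  simp only [pfn]; split_ifs <;> omega

lemma pfn_inv_char (g a b : ℕ) (ha : a < g) (hb : b < g) :
    (a < b ∧ pfn g b < pfn g a) ↔ (a % 2 = 0 ∧ b = a + 1) := by
  simp only [pfn]; split_ifs <;> omega

lemma invCount_wperm (g : ℕ) : invCount g (wperm g) = g / 2 := by
  unfold invCount
  rw [← Finset.card_range (g/2)]
  apply Finset.card_bij (fun p _ => p.1.val / 2)
  · intro p hp
    simp only [Finset.mem_filter, Finset.mem_univ, true_and, Fin.lt_def, wperm_apply] at hp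
    have hchar := (pfn_inv_char g p.1.val p.2.val p.1.isLt p.2.isLt).mp hp
    have := p.2.isLt
    rw [Finset.mem_range]
    omega
  · intro p hp q hq h
    simp only [Finset.mem_filter, Finset.mem_univ, true_and, Fin.lt_def, wperm_apply] at hp hq
    have hp' := (pfn_inv_char g p.1.val p.2.val p.1.isLt p.2.isLt).mp hp
    have hq' := (pfn_inv_char g q.1.val q.2.val q.1.isLt q.2.isLt).mp hq
    have h1 : p.1.val = q.1.val := by omega
    have h2 : p.2.val = q.2.val := by omega
    exact Prod.ext (Fin.ext h1) (Fin.ext h2)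
  · intro n hn
    rw [Finset.mem_range] at hn
    refine ⟨(⟨2*n, by omega⟩, ⟨2*n+1, by omega⟩), ?_, ?_⟩
    · simp only [Finset.mem_filter, Finset.mem_univ, true_and, Fin.lt_def, wperm_apply]
      exact (pfn_inv_char g (2*n) (2*n+1) (by omega) (by omega)).mpr (by omega)
    · show 2*n/2 = n
      omega

lemma fixCount_wperm (g : ℕ) (hg : 0 < g) : fixCount g (wperm g) = g % 2 := by
  unfold fixCount
  rcases Nat.even_or_odd g with he | ho
  · have : ((Finset.univ : Finset (Fin g)).filter (fun i => (wperm g) i = i)) = ∅ := by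
      rw [Finset.filter_eq_empty_iff]
      intro i _ h
      rw [Fin.ext_iff, wperm_apply] at h
      have := i.isLt
      obtain ⟨m, hm⟩ := he
      revert h
      simp only [pfn]; split_ifs <;> omega
    rw [this]
    obtain ⟨m, hm⟩ := he
    simp; omega
  · obtain ⟨m, hm⟩ := ho
    have : ((Finset.univ : Finset (Fin g)).filter (fun i => (wperm g) i = i))
        = {⟨g - 1, by omega⟩} := by
      ext i
      simp only [Finset.mem_filter, Finset.mem_univ, true_and, Finset.mem_singleton,
        Fin.ext_iff, wperm_apply]
      have := i.isLt
      simp only [pfn]; split_ifs <;> omega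
    rw [this, Finset.card_singleton]
    omega

/-- The maximum over all permutations `σ` of `{1,…,g}` of
`g(g+1)/2 + 2·(A_σ + A_{σ⁻¹}) − inv(σ) − fix(σ)` equals `⌊g²/2⌋`. -/
theorem max_length_prank_zero (g : ℕ) (hg : 0 < g) :
    IsGreatest
      {x : ℤ | ∃ σ : Equiv.Perm (Fin g),
        x = ((g * (g + 1) / 2 : ℕ) : ℤ)
          + 2 * ((ACount g σ : ℤ) + (ACount g σ⁻¹ : ℤ))
          - invCount g σ - fixCount g σ}
      ((g ^ 2 / 2 : ℕ) : ℤ) := by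
  constructor
  · refine ⟨wperm g, ?_⟩
    rw [wperm_inv, ACount_wperm, invCount_wperm, fixCount_wperm g hg]
    rcases Nat.even_or_odd g with ⟨m, hm⟩ | ⟨m, hm⟩
    · have h1 : g * (g + 1) = 2 * (2 * (m * m) + m) := by subst hm; ring
      have h2 : g ^ 2 = 2 * (2 * (m * m)) := by subst hm; ring
      omega
    · have h1 : g * (g + 1) = 2 * (2 * (m * m) + 3 * m + 1) := by subst hm; ring
      have h2 : g ^ 2 = 2 * (2 * (m * m) + 2 * m) + 1 := by subst hm; ring
      omega
  · rintro x ⟨σ, rfl⟩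
    have h := main_bound g σ
    rcases Nat.even_or_odd g with ⟨m, hm⟩ | ⟨m, hm⟩
    · have h1 : g * (g + 1) = 2 * (2 * (m * m) + m) := by subst hm; ring
      have h2 : g ^ 2 = 2 * (2 * (m * m)) := by subst hm; ring
      omega
    · have h1 : g * (g + 1) = 2 * (2 * (m * m) + 3 * m + 1) := by subst hm; ring
      have h2 : g ^ 2 = 2 * (2 * (m * m) + 2 * m) + 1 := by subst hm; ring
      omega
end

section
/- For every positive integer g and every permutation σ of {1,…,g}, the sum over the positive roots β³_i (1 ≤ i ≤ g) of the Iwahori–Matsumoto term of β³_i — namely |⟨β³_i, λ_σ⟩| if w_σ⁻¹β³_i is positive and |⟨β³_i, λ_σ⟩ + 1| if w_σ⁻¹β³_i is negative — equals g − fix(σ). -/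
open Finset

/-- The positive root `β¹_{ij}` of type `C_g`, as a vector in `ℤ^{2g}`
(0-indexed: the 1-indexed position `m` corresponds to the index `m − 1`, so
the 1-indexed position `2g − m + 1` corresponds to `2g − 1 − (m−1) = rev`):
`+1` at positions `i` and `2g−1−j`, `−1` at positions `j` and `2g−1−i`. -/
def beta1 (g : ℕ) (i j : Fin g) : Fin (2 * g) → ℤ := fun k =>
  if k.val = i.val ∨ k.val = 2 * g - 1 - j.val then 1
  else if k.val = j.val ∨ k.val = 2 * g - 1 - i.val then -1 else 0

/-- The positive root `β²_{ij}`: `+1` at `i` and `j`, `−1` at `2g−1−i` and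
`2g−1−j` (0-indexed). -/
def beta2 (g : ℕ) (i j : Fin g) : Fin (2 * g) → ℤ := fun k =>
  if k.val = i.val ∨ k.val = j.val then 1
  else if k.val = 2 * g - 1 - i.val ∨ k.val = 2 * g - 1 - j.val then -1 else 0

/-- The positive root `β³_i`: `+1` at `i`, `−1` at `2g−1−i` (0-indexed). -/
def beta3 (g : ℕ) (i : Fin g) : Fin (2 * g) → ℤ := fun k =>
  if k.val = i.val then 1 else if k.val = 2 * g - 1 - i.val then -1 else 0

/-- The pairing `⟨β, λ⟩ = Σ_k β(k)·λ(k)`. -/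
def rootPairing (g : ℕ) (β lam : Fin (2 * g) → ℤ) : ℤ := ∑ k, β k * lam k

/-- A vector of `ℤ^{2g}` is a positive root (of type `C_g`) if it is one of the
`β¹_{ij}`, `β²_{ij}` (`i < j`) or `β³_i`. -/
def IsPosRoot (g : ℕ) (v : Fin (2 * g) → ℤ) : Prop :=
  (∃ i j : Fin g, i < j ∧ (v = beta1 g i j ∨ v = beta2 g i j)) ∨
    ∃ i : Fin g, v = beta3 g i

/-- The Iwahori–Matsumoto term of a positive root `β` with respect to the
translation part `λ` and the finite part `w`: it is `|⟨β,λ⟩|` if `w⁻¹β` is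
again a positive root, and `|⟨β,λ⟩ + 1|` if `w⁻¹β` is negative.  Note that
`(w⁻¹·β)(k) = β(w(k))`, i.e. `w⁻¹·β = β ∘ w`. -/
noncomputable def IMterm (g : ℕ) (w : Equiv.Perm (Fin (2 * g)))
    (lam β : Fin (2 * g) → ℤ) : ℤ :=
  letI := Classical.dec (IsPosRoot g (β ∘ w))
  if IsPosRoot g (β ∘ w) then |rootPairing g β lam| else |rootPairing g β lam + 1|

/-- The translation element `λ` attached to a fixed-point-free `w`:
`λ(i) = 1` if `w⁻¹(i) < i`, and `λ(i) = 0` otherwise. -/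
def lambdaOf (g : ℕ) (w : Equiv.Perm (Fin (2 * g))) : Fin (2 * g) → ℤ :=
  fun i => if w⁻¹ i < i then 1 else 0

/-- The embedding of `{1,…,g}` into `{1,…,2g}` (0-indexed model). -/
def emb (g : ℕ) (i : Fin g) : Fin (2 * g) := ⟨i.val, by have := i.isLt; omega⟩

/-- Sum of the Iwahori–Matsumoto terms over the long roots `β¹_{ij}`, `β²_{ij}`,
`i < j`. -/
noncomputable def IMsumLong (g : ℕ) (w : Equiv.Perm (Fin (2 * g)))
    (lam : Fin (2 * g) → ℤ) : ℤ :=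
  ∑ p ∈ (Finset.univ : Finset (Fin g × Fin g)).filter (fun p => p.1 < p.2),
    (IMterm g w lam (beta1 g p.1 p.2) + IMterm g w lam (beta2 g p.1 p.2))

/-- Sum of the Iwahori–Matsumoto terms over the roots `β³_i`. -/
noncomputable def IMsumShort (g : ℕ) (w : Equiv.Perm (Fin (2 * g)))
    (lam : Fin (2 * g) → ℤ) : ℤ :=
  ∑ i : Fin g, IMterm g w lam (beta3 g i)

section aux

variable {g : ℕ}

lemma emb_val (i : Fin g) : (emb g i).val = i.val := rfl

lemma emb_rev_val (i : Fin g) : (emb g i).rev.val = 2 * g - 1 - i.val := by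
  rw [Fin.val_rev]; simp [emb_val]; omega

lemma pairing_beta3 (i : Fin g) (lam : Fin (2 * g) → ℤ) :
    rootPairing g (beta3 g i) lam = lam (emb g i) - lam (emb g i).rev := by
  have hlt : i.val < g := i.isLt
  have key : ∀ k : Fin (2 * g), beta3 g i k * lam k =
      (if k = emb g i then lam k else 0) + (if k = (emb g i).rev then -lam k else 0) := by
    intro k
    unfold beta3
    have h1 : (k = emb g i) ↔ k.val = i.val := by
      rw [Fin.ext_iff, emb_val]
    have h2 : (k = (emb g i).rev) ↔ k.val = 2 * g - 1 - i.val := by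
      rw [Fin.ext_iff, emb_rev_val]
    have c2 : ¬ (i.val = 2 * g - 1 - i.val) := by omega
    by_cases h1 : k.val = i.val
    · have hk : k = emb g i := Fin.ext (by rw [emb_val]; exact h1)
      subst hk
      have hk2 : emb g i ≠ (emb g i).rev := by
        rw [Ne, Fin.ext_iff, emb_rev_val, emb_val]; exact c2
      simp [emb_val, emb_rev_val, hk2, c2]
    · by_cases h2 : k.val = 2 * g - 1 - i.val
      · have hk : k = (emb g i).rev := Fin.ext (by rw [emb_rev_val]; exact h2)
        subst hk
        have hk1 : (emb g i).rev ≠ emb g i := by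
          rw [Ne, Fin.ext_iff, emb_rev_val, emb_val]; omega
        have c1 : ¬ (2 * g - 1 - i.val = i.val) := by omega
        simp [emb_rev_val, emb_val, hk1, c1]
        simp only [eq_false (show ¬ (2 * g - (i.val + 1) = i.val) by omega),
          eq_true (show 2 * g - (i.val + 1) = 2 * g - 1 - i.val by omega), if_false, if_true, neg_one_mul]
      · have hk1 : k ≠ emb g i := by rw [Ne, Fin.ext_iff, emb_val]; exact h1
        have hk2 : k ≠ (emb g i).rev := by rw [Ne, Fin.ext_iff, emb_rev_val]; exact h2
        simp [h1, h2, hk1, hk2]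
  unfold rootPairing
  rw [Finset.sum_congr rfl fun k _ => key k, Finset.sum_add_distrib,
    Finset.sum_ite_eq' Finset.univ (emb g i) lam,
    Finset.sum_ite_eq' Finset.univ (emb g i).rev (fun k => -lam k)]
  simp [sub_eq_add_neg]

theorem Equiv.Perm.apply_inv_self {α : Type*} (f : Equiv.Perm α) (x : α) : f (f⁻¹ x) = x :=
  f.apply_symm_apply x

theorem Equiv.Perm.inv_apply_self {α : Type*} (f : Equiv.Perm α) (x : α) : f⁻¹ (f x) = x :=
  f.symm_apply_apply x

lemma winv_rev (w : Equiv.Perm (Fin (2 * g)))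
    (hw : ∀ k : Fin (2 * g), w k.rev = (w k).rev) (k : Fin (2 * g)) :
    w⁻¹ k.rev = (w⁻¹ k).rev := by
  have := hw (w⁻¹ k)
  rw [Equiv.Perm.apply_inv_self] at this
  have : w⁻¹ k.rev = w⁻¹ (w (w⁻¹ k).rev) := by rw [this]
  rw [this, Equiv.Perm.inv_apply_self]

end aux

/-- The contribution of the roots `β³_i` to the Iwahori–Matsumoto length of
`t^{λ_σ} w_σ` equals `g − fix(σ)`. -/
theorem IM_short_roots_contribution (g : ℕ) (hg : 0 < g) (σ : Equiv.Perm (Fin g))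
    (w : Equiv.Perm (Fin (2 * g)))
    (hw : ∀ k : Fin (2 * g), w k.rev = (w k).rev)
    (hwσ : ∀ i : Fin g, w (emb g i) =
      if σ i = i then (emb g i).rev else emb g (σ i)) :
    IMsumShort g w (lambdaOf g w) = (g : ℤ) - fixCount g σ := by
  have keyterm : ∀ i : Fin g, IMterm g w (lambdaOf g w) (beta3 g i)
      = if σ i = i then 0 else 1 := by
    intro i
    by_cases hfix : σ i = i
    · have hwi : w (emb g i) = (emb g i).rev := by rw [hwσ i, if_pos hfix]
      have hinv1 : w⁻¹ (emb g i) = (emb g i).rev := by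
        have h := hw (emb g i)
        rw [hwi, Fin.rev_rev] at h
        conv_lhs => rw [← h]
        rw [Equiv.Perm.inv_apply_self]
      have hinv2 : w⁻¹ (emb g i).rev = emb g i := by
        rw [← hwi, Equiv.Perm.inv_apply_self]
      have hlt : (emb g i) < (emb g i).rev := by
        rw [Fin.lt_def, emb_val, emb_rev_val]; have := i.isLt; omega
      have hpair : rootPairing g (beta3 g i) (lambdaOf g w) = -1 := by
        rw [pairing_beta3]
        unfold lambdaOf
        rw [hinv1, hinv2, if_neg (not_lt.mpr hlt.le), if_pos hlt]
        norm_num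
      have hval : ∀ a : Fin g, (beta3 g i ∘ w) (emb g a) ≠ 1 := by
        intro a h
        simp only [Function.comp, beta3] at h
        by_cases h1 : (w (emb g a)).val = i.val
        · have h2 : w (emb g a) = emb g i := Fin.ext h1
          have h3 : emb g a = w⁻¹ (emb g i) := by
            rw [← h2, Equiv.Perm.inv_apply_self]
          rw [hinv1] at h3
          have h4 := congrArg Fin.val h3
          rw [emb_val, emb_rev_val] at h4
          have := a.isLt; have := i.isLt; omega
        · rw [if_neg h1] at h
          split_ifs at h <;> omega
      have hnotpos : ¬ IsPosRoot g (beta3 g i ∘ w) := by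
        rintro (⟨a, b, hab, hv | hv⟩ | ⟨a, hv⟩)
        · apply hval a; rw [hv]; unfold beta1; rw [if_pos (Or.inl (emb_val a))]
        · apply hval a; rw [hv]; unfold beta2; rw [if_pos (Or.inl (emb_val a))]
        · apply hval a; rw [hv]; unfold beta3; rw [if_pos (emb_val a)]
      rw [if_pos hfix]
      unfold IMterm
      rw [if_neg hnotpos, hpair]
      norm_num
    · set j := σ⁻¹ i with hjdef
      have hji : σ j = i := Equiv.Perm.apply_inv_self σ i
      have hjne : j ≠ i := fun h => hfix (h ▸ hji)
      have hjj : σ j ≠ j := by rw [hji]; exact Ne.symm hjne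
      have hwj : w (emb g j) = emb g i := by rw [hwσ j, if_neg hjj, hji]
      have hinv1 : w⁻¹ (emb g i) = emb g j := by
        rw [← hwj, Equiv.Perm.inv_apply_self]
      have hinv2 : w⁻¹ (emb g i).rev = (emb g j).rev := by
        rw [winv_rev w hw, hinv1]
      have hpos : IsPosRoot g (beta3 g i ∘ w) := by
        refine Or.inr ⟨j, funext fun k => ?_⟩
        simp only [Function.comp, beta3]
        have e1 : ((w k).val = i.val) ↔ (k.val = j.val) := by
          constructor
          · intro h
            have h2 : w k = emb g i := Fin.ext h
            have h3 : k = emb g j := by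
              rw [← hinv1, ← h2, Equiv.Perm.inv_apply_self]
            rw [h3, emb_val]
          · intro h
            have h2 : k = emb g j := Fin.ext h
            rw [h2, hwj, emb_val]
        have e2 : ((w k).val = 2 * g - 1 - i.val) ↔ (k.val = 2 * g - 1 - j.val) := by
          constructor
          · intro h
            have h2 : w k = (emb g i).rev := Fin.ext (by rw [emb_rev_val]; exact h)
            have h3 : k = (emb g j).rev := by
              rw [← hinv2, ← h2, Equiv.Perm.inv_apply_self]
            rw [h3, emb_rev_val]
          · intro h
            have h2 : k = (emb g j).rev := Fin.ext (by rw [emb_rev_val]; exact h)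
            rw [h2, hw, hwj, emb_rev_val]
        rw [if_congr e1 rfl (if_congr e2 rfl rfl)]
      have hpair : |rootPairing g (beta3 g i) (lambdaOf g w)| = 1 := by
        rw [pairing_beta3]
        unfold lambdaOf
        rw [hinv1, hinv2]
        have d1 : (emb g j < emb g i) ↔ j.val < i.val := by
          rw [Fin.lt_def, emb_val, emb_val]
        have d2 : ((emb g j).rev < (emb g i).rev) ↔ i.val < j.val := by
          rw [Fin.lt_def, emb_rev_val, emb_rev_val]
          have := i.isLt; have := j.isLt; omega
        have hne' : j.val ≠ i.val := fun h => hjne (Fin.ext h)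
        rcases lt_trichotomy j.val i.val with h | h | h
        · rw [if_pos (d1.mpr h), if_neg (by rw [d2]; omega)]; norm_num
        · exact absurd h hne'
        · rw [if_neg (by rw [d1]; omega), if_pos (d2.mpr h)]; norm_num
      rw [if_neg hfix]
      unfold IMterm
      rw [if_pos hpos, hpair]
  unfold IMsumShort
  rw [Finset.sum_congr rfl fun i _ => keyterm i]
  have step : ∀ i : Fin g, (if σ i = i then (0:ℤ) else 1)
      = 1 - (if σ i = i then (1:ℤ) else 0) := by
    intro i; split_ifs <;> ring
  rw [Finset.sum_congr rfl fun i _ => step i, Finset.sum_sub_distrib,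
    Finset.sum_const, Finset.sum_boole]
  simp [fixCount]
end

section
/- Let g ≥ 1, let w be a permutation of {1,…,2g} with w(2g+1−i) = 2g+1−w(i) for all i, and let λ ∈ ℤ^{2g}. For 0 ≤ i ≤ 2g define ω_i ∈ ℤ^{2g} by ω_i(j) = −1 for j ≤ i and ω_i(j) = 0 for j > i, and set x_i := λ + w·ω_i, where (w·v)(j) = v(w⁻¹(j)). Assume that x_i(j) − ω_i(j) ∈ {0,1} for all 0 ≤ i ≤ 2g and 1 ≤ j ≤ 2g. Define x̃_i ∈ ℤ^{2g} by x̃_i(j) := min(x_i(j), 0), and define ρ ∈ ℤ^{2g} by ρ(i) := λ(w(i)). Then: (a) λ(j) = x̃_{2g}(j) + 1 for all j; (b) for each 1 ≤ i ≤ 2g, ρ(i) = 1 if x̃_{i−1} = x̃_i and ρ(i) = 0 if x̃_{i−1} ≠ x̃_i; (c) whenever x̃_{i−1} ≠ x̃_i, the difference x̃_i − x̃_{i−1} is the vector with entry −1 at position w(i) and 0 elsewhere. -/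
open Finset

/-- The vector `ω_i ∈ ℤ^{2g}` (0-indexed model of positions `{1,…,2g}`): its
first `i` entries are `−1` and the remaining entries are `0`. -/
def omegaVec (g : ℕ) (i : ℕ) : Fin (2 * g) → ℤ :=
  fun j => if j.val < i then -1 else 0

/-- The extended alcove `x_i := λ + w·ω_i`, where `(w·v)(j) = v(w⁻¹(j))`. -/
def alcoveX (g : ℕ) (w : Equiv.Perm (Fin (2 * g))) (lam : Fin (2 * g) → ℤ)
    (i : ℕ) : Fin (2 * g) → ℤ :=
  fun j => lam j + omegaVec g i (w⁻¹ j)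

/-- `x̃_i(j) := min(x_i(j), 0)`. -/
def alcoveXt (g : ℕ) (w : Equiv.Perm (Fin (2 * g))) (lam : Fin (2 * g) → ℤ)
    (i : ℕ) : Fin (2 * g) → ℤ :=
  fun j => min (alcoveX g w lam i j) 0

/-- Let `w` be a permutation of `{1,…,2g}` with `w(2g+1−i) = 2g+1−w(i)` and
`λ ∈ ℤ^{2g}`, and assume the permissibility condition
`x_i(j) − ω_i(j) ∈ {0,1}` for the extended alcove `x_i = λ + w·ω_i`.  Then:
(a) `λ(j) = x̃_{2g}(j) + 1` for all `j`;
(b) `ρ(i) := λ(w(i))` equals `1` if `x̃_{i−1} = x̃_i` and `0` if `x̃_{i−1} ≠ x̃_i`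
    (0-indexed: the 1-indexed index `i ∈ {1,…,2g}` corresponds to `i : Fin (2g)`,
    comparing `x̃_{i.val}` and `x̃_{i.val+1}`);
(c) whenever `x̃_{i−1} ≠ x̃_i`, the difference `x̃_i − x̃_{i−1}` has entry `−1`
    at position `w(i)` and `0` elsewhere. -/
theorem extended_alcove_determined_by_flags (g : ℕ) (hg : 0 < g)
    (w : Equiv.Perm (Fin (2 * g)))
    (hw : ∀ k : Fin (2 * g), w k.rev = (w k).rev)
    (lam : Fin (2 * g) → ℤ)
    (hperm : ∀ i ≤ 2 * g, ∀ j,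
      alcoveX g w lam i j - omegaVec g i j = 0 ∨
      alcoveX g w lam i j - omegaVec g i j = 1) :
    (∀ j, lam j = alcoveXt g w lam (2 * g) j + 1) ∧
    (∀ i : Fin (2 * g),
      (alcoveXt g w lam i.val = alcoveXt g w lam (i.val + 1) → lam (w i) = 1) ∧
      (alcoveXt g w lam i.val ≠ alcoveXt g w lam (i.val + 1) → lam (w i) = 0)) ∧
    (∀ i : Fin (2 * g), alcoveXt g w lam i.val ≠ alcoveXt g w lam (i.val + 1) →
      ∀ j, alcoveXt g w lam (i.val + 1) j - alcoveXt g w lam i.val j =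
        if j = w i then -1 else 0) := by
  have hlam : ∀ j, lam j = 0 ∨ lam j = 1 := by
    intro j
    have := hperm 0 (Nat.zero_le _) j
    simpa [alcoveX, omegaVec] using this
  have hstep : ∀ (i : Fin (2 * g)) (j : Fin (2 * g)), j ≠ w i →
      alcoveXt g w lam (i.val + 1) j = alcoveXt g w lam i.val j := by
    intro i j hj
    have hne : (w⁻¹ j) ≠ i := fun h => hj (by rw [← h]; simp)
    have hne' : (w⁻¹ j).val ≠ i.val := fun h => hne (Fin.ext h)
    have hiff : ((w⁻¹ j).val < i.val + 1) = ((w⁻¹ j).val < i.val) := by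
      apply propext; omega
    simp only [alcoveXt, alcoveX, omegaVec, hiff]
  have hinv : ∀ i : Fin (2 * g), (w⁻¹ (w i)) = i := by intro i; simp
  have hati : ∀ i : Fin (2 * g), alcoveXt g w lam i.val (w i) = 0 := by
    intro i
    rcases hlam (w i) with h | h <;>
      simp [alcoveXt, alcoveX, omegaVec, hinv i, h]
  have hati1 : ∀ i : Fin (2 * g),
      alcoveXt g w lam (i.val + 1) (w i) = lam (w i) - 1 := by
    intro i
    rcases hlam (w i) with h | h <;>
      · simp [alcoveXt, alcoveX, omegaVec, hinv i, h]
  have hbeq : ∀ i : Fin (2 * g), lam (w i) = 1 →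
      alcoveXt g w lam i.val = alcoveXt g w lam (i.val + 1) := by
    intro i h
    funext j
    by_cases hj : j = w i
    · rw [hj, hati, hati1, h]; ring
    · exact (hstep i j hj).symm
  have hb0 : ∀ i : Fin (2 * g),
      alcoveXt g w lam i.val ≠ alcoveXt g w lam (i.val + 1) → lam (w i) = 0 := by
    intro i hne
    rcases hlam (w i) with h | h
    · exact h
    · exact absurd (hbeq i h) hne
  refine ⟨?_, fun i => ⟨?_, hb0 i⟩, ?_⟩
  · intro j
    have hlt : (w⁻¹ j).val < 2 * g := (w⁻¹ j).isLt
    rcases hlam j with h | h <;>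
      · simp [alcoveXt, alcoveX, omegaVec, hlt, h]
  · intro h
    have := congrFun h (w i)
    rw [hati, hati1] at this
    omega
  · intro i hne j
    have h0 := hb0 i hne
    by_cases hj : j = w i
    · rw [hj, hati1, hati, h0]
      simp
    · rw [hstep i j hj]
      simp [hj]
end

section
/- Let g ≥ 1 and let W be the group of permutations w of {1,…,2g} with w(i) + w(2g+1−i) = 2g+1 for all i. Call w ∈ W final if w(1) < w(2) < ⋯ < w(g). For final w define ν_w : {0,1,…,g} → ℤ by ν_w(i) = i − #{a ∈ {1,…,g} : w(a) ≤ i}. Then for every final w, ν_w is an elementary sequence (i.e. ν_w(0) = 0, ν_w takes nonnegative values, and ν_w(i) ≤ ν_w(i+1) ≤ ν_w(i) + 1 for 0 ≤ i < g), and the map w ↦ ν_w is a bijection from the set of final elements of W onto the set of all elementary sequences. -/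
open Finset

/-- The symmetry condition defining the Weyl group `W` of `GSp_{2g}` inside
`S_{2g}`: `w(i) + w(2g+1−i) = 2g+1` for all `i` (0-indexed via `Fin.rev`). -/
def InW (g : ℕ) (w : Equiv.Perm (Fin (2 * g))) : Prop :=
  ∀ k : Fin (2 * g), w k.rev = (w k).rev

/-- `w` is final: `w(1) < w(2) < ⋯ < w(g)`. -/
def IsFinal (g : ℕ) (w : Equiv.Perm (Fin (2 * g))) : Prop :=
  ∀ a b : Fin (2 * g), a < b → b.val < g → w a < w b

/-- The sequence `ν_w(i) = i − #{a ∈ {1,…,g} : w(a) ≤ i}`, for `0 ≤ i ≤ g`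
(0-indexed model: `a ∈ {1,…,g}` becomes `a.val < g`, and `w(a) ≤ i` becomes
`(w a).val < i`). -/
def nuSeq (g : ℕ) (w : Equiv.Perm (Fin (2 * g))) (i : ℕ) : ℤ :=
  (i : ℤ) - (((Finset.univ : Finset (Fin (2 * g))).filter
    (fun a => a.val < g ∧ ((w a).val < i))).card : ℤ)

/-- An elementary sequence: a function `φ` on `{0,…,g}` with nonnegative
values, `φ(0) = 0` and `φ(i) ≤ φ(i+1) ≤ φ(i) + 1`. -/
def IsElementary (g : ℕ) (φ : ℕ → ℤ) : Prop :=
  φ 0 = 0 ∧ (∀ i ≤ g, 0 ≤ φ i) ∧ ∀ i < g, φ i ≤ φ (i + 1) ∧ φ (i + 1) ≤ φ i + 1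

namespace FB


variable {g : ℕ}

/-- The count `#{a : a < g ∧ w a < i}`. -/
def C (g : ℕ) (w : Equiv.Perm (Fin (2 * g))) (i : ℕ) : ℕ :=
  ((Finset.univ : Finset (Fin (2 * g))).filter
    (fun a => a.val < g ∧ ((w a).val < i))).card

def T (g : ℕ) (w : Equiv.Perm (Fin (2 * g))) (i : ℕ) : Finset (Fin (2 * g)) :=
  (Finset.univ : Finset (Fin (2 * g))).filter (fun a => a.val < g ∧ ((w a).val = i))

lemma C_zero (w : Equiv.Perm (Fin (2 * g))) : C g w 0 = 0 := by
  simp [C]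

lemma C_le (w : Equiv.Perm (Fin (2 * g))) (i : ℕ) : C g w i ≤ i := by
  have h : C g w i ≤ (Finset.range i).card := by
    apply Finset.card_le_card_of_injOn (fun a : Fin (2 * g) => (w a).val)
    · intro a ha
      simp only [Finset.mem_coe, Finset.mem_filter, Finset.mem_univ, true_and] at ha
      exact Finset.mem_range.2 ha.2
    · intro a ha b hb hab
      exact w.injective (Fin.val_injective hab)
  simpa using h

lemma T_card_le (w : Equiv.Perm (Fin (2 * g))) (i : ℕ) : (T g w i).card ≤ 1 := by
  apply Finset.card_le_one.2
  intro a ha b hb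
  simp only [T, Finset.mem_filter, Finset.mem_univ, true_and] at ha hb
  exact w.injective (Fin.val_injective (ha.2.trans hb.2.symm))

lemma C_succ (w : Equiv.Perm (Fin (2 * g))) (i : ℕ) :
    C g w (i + 1) = C g w i + (T g w i).card := by
  rw [C, C, ← Finset.card_union_of_disjoint]
  · congr 1
    ext a
    simp only [T, Finset.mem_union, Finset.mem_filter, Finset.mem_univ, true_and]
    constructor
    · rintro ⟨h1, h2⟩
      rcases Nat.lt_succ_iff_lt_or_eq.1 h2 with h | h
      · exact Or.inl ⟨h1, h⟩
      · exact Or.inr ⟨h1, h⟩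
    · rintro (⟨h1, h2⟩ | ⟨h1, h2⟩)
      · exact ⟨h1, Nat.lt_succ_of_lt h2⟩
      · exact ⟨h1, by omega⟩
  · rw [Finset.disjoint_left]
    intro a ha hb
    simp only [T, Finset.mem_filter, Finset.mem_univ, true_and] at ha hb
    omega

/-- The image of the first half. -/
def Aset (g : ℕ) (w : Equiv.Perm (Fin (2 * g))) : Finset (Fin (2 * g)) :=
  ((Finset.univ : Finset (Fin (2 * g))).filter (fun a => a.val < g)).image w

lemma mem_Aset {w : Equiv.Perm (Fin (2 * g))} {j : Fin (2 * g)} :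
    j ∈ Aset g w ↔ ∃ a : Fin (2 * g), a.val < g ∧ w a = j := by
  simp [Aset, Finset.mem_image]

lemma T_nonempty_iff {w : Equiv.Perm (Fin (2 * g))} {j : Fin (2 * g)} :
    (T g w j.val).Nonempty ↔ j ∈ Aset g w := by
  rw [mem_Aset]
  constructor
  · rintro ⟨a, ha⟩
    simp only [T, Finset.mem_filter, Finset.mem_univ, true_and] at ha
    exact ⟨a, ha.1, Fin.val_injective ha.2⟩
  · rintro ⟨a, h1, h2⟩
    exact ⟨a, by simp [T, h1, h2]⟩

lemma mem_Aset_iff_C {w : Equiv.Perm (Fin (2 * g))} {j : Fin (2 * g)} :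
    j ∈ Aset g w ↔ C g w (j.val + 1) = C g w j.val + 1 := by
  rw [← T_nonempty_iff, C_succ, ← Finset.card_pos]
  have := T_card_le w j.val
  omega

lemma rev_val_lt {k : Fin (2 * g)} (h : g ≤ k.val) : k.rev.val < g := by
  have := k.isLt
  rw [Fin.val_rev]
  omega

lemma rev_val_ge {k : Fin (2 * g)} (h : k.val < g) : g ≤ k.rev.val := by
  have := k.isLt
  rw [Fin.val_rev]
  omega

lemma mem_Aset_rev {w : Equiv.Perm (Fin (2 * g))} (hw : ∀ k : Fin (2 * g), w k.rev = (w k).rev)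
    (j : Fin (2 * g)) : j.rev ∈ Aset g w ↔ j ∉ Aset g w := by
  set a := w.symm j with ha
  have haj : w a = j := w.apply_symm_apply j
  have harev : w a.rev = j.rev := by rw [hw a, haj]
  by_cases hag : a.val < g
  · have hj : j ∈ Aset g w := mem_Aset.2 ⟨a, hag, haj⟩
    simp only [hj, not_true, iff_false]
    intro hc
    obtain ⟨b, hb1, hb2⟩ := mem_Aset.1 hc
    have : b = a.rev := w.injective (hb2.trans harev.symm)
    subst this
    exact absurd hb1 (by have := rev_val_ge hag; omega)
  · have hrev : a.rev.val < g := rev_val_lt (le_of_not_gt hag)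
    have hj : j.rev ∈ Aset g w := mem_Aset.2 ⟨a.rev, hrev, harev⟩
    simp only [hj, true_iff]
    intro hc
    obtain ⟨b, hb1, hb2⟩ := mem_Aset.1 hc
    have : b = a := w.injective (hb2.trans haj.symm)
    subst this
    exact hag hb1

lemma Hcard : (((Finset.univ : Finset (Fin (2 * g)))).filter (fun a => a.val < g)).card = g := by
  have : ((Finset.univ : Finset (Fin (2 * g)))).filter (fun a => a.val < g)
      = (Finset.range g).attachFin (fun m hm => by
          simp only [Finset.mem_range] at hm; omega) := by
    ext a
    simp [Finset.mem_attachFin]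
  rw [this, Finset.card_attachFin, Finset.card_range]

section Construction

variable (g : ℕ) (φ : ℕ → ℤ)

/-- Positions `< g` where the step of `φ` is zero. -/
def Bset : Finset (Fin (2 * g)) :=
  (Finset.univ : Finset (Fin (2 * g))).filter
    (fun j => j.val < g ∧ φ (j.val + 1) = φ j.val)

/-- The target image of the first half. -/
def ASet : Finset (Fin (2 * g)) :=
  Bset g φ ∪ (((Finset.univ : Finset (Fin (2 * g))).filter (fun j => j.val < g))
    \ Bset g φ).image Fin.rev

variable {g φ}

lemma memA_lt {j : Fin (2 * g)} (hj : j.val < g) :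
    j ∈ ASet g φ ↔ φ (j.val + 1) = φ j.val := by
  simp only [ASet, Finset.mem_union, Bset, Finset.mem_image, Finset.mem_filter,
    Finset.mem_sdiff, Finset.mem_univ, true_and]
  constructor
  · rintro (⟨_, h⟩ | ⟨x, ⟨⟨hx, _⟩, hxj⟩⟩)
    · exact h
    · exfalso
      have := rev_val_ge hx
      rw [hxj] at this
      omega
  · intro h
    exact Or.inl ⟨hj, h⟩

lemma memA_rev {j : Fin (2 * g)} (hj : j.val < g) :
    j.rev ∈ ASet g φ ↔ ¬ φ (j.val + 1) = φ j.val := by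
  simp only [ASet, Finset.mem_union, Bset, Finset.mem_image, Finset.mem_filter,
    Finset.mem_sdiff, Finset.mem_univ, true_and]
  have hge := rev_val_ge hj
  constructor
  · rintro (⟨h, _⟩ | ⟨x, ⟨⟨hx, hx2⟩, hxj⟩⟩)
    · omega
    · have : x = j := Fin.rev_injective hxj
      subst this
      exact fun hc => hx2 ⟨hx, hc⟩
  · intro h
    exact Or.inr ⟨j, ⟨⟨hj, fun hc => h hc.2⟩, rfl⟩⟩

lemma A_rev {j : Fin (2 * g)} (hj : j ∈ ASet g φ) : j.rev ∉ ASet g φ := by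
  by_cases h : j.val < g
  · rw [memA_rev h]
    intro hc
    exact hc ((memA_lt h).1 hj)
  · have hrev : j.rev.val < g := rev_val_lt (le_of_not_gt h)
    rw [← Fin.rev_rev j] at hj
    rw [memA_rev hrev] at hj
    rw [memA_lt hrev]
    intro hc
    exact hj hc

lemma A_card : (ASet g φ).card = g := by
  rw [ASet, Finset.card_union_of_disjoint, Finset.card_image_of_injective _ Fin.rev_injective,
    Finset.card_sdiff_of_subset, Hcard]
  · have hB : (Bset g φ).card ≤ g := by
      have step : (Bset g φ).card
          ≤ (((Finset.univ : Finset (Fin (2 * g)))).filter (fun a => a.val < g)).card := by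
        apply Finset.card_le_card
        intro x hx
        simp only [Bset, Finset.mem_filter, Finset.mem_univ, true_and] at hx ⊢
        exact hx.1
      exact step.trans (le_of_eq Hcard)
    omega
  · intro x hx
    simp only [Bset, Finset.mem_filter, Finset.mem_univ, true_and] at hx ⊢
    exact hx.1
  · rw [Finset.disjoint_left]
    intro x hx hc
    simp only [Bset, Finset.mem_filter, Finset.mem_univ, true_and] at hx
    obtain ⟨y, hy, hyx⟩ := Finset.mem_image.1 hc
    simp only [Finset.mem_sdiff, Finset.mem_filter, Finset.mem_univ, true_and] at hy
    have := rev_val_ge hy.1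
    rw [hyx] at this
    omega

variable (g φ)

/-- The increasing enumeration of `ASet`. -/
noncomputable def eIso : Fin g ≃o {x // x ∈ ASet g φ} :=
  (ASet g φ).orderIsoOfFin A_card

/-- The underlying function of the final element associated to `φ`. -/
noncomputable def fFun : Fin (2 * g) → Fin (2 * g) := fun k =>
  if h : k.val < g then (eIso g φ ⟨k.val, h⟩ : Fin (2 * g))
  else (Fin.rev (eIso g φ ⟨k.rev.val, rev_val_lt (le_of_not_gt h)⟩ : Fin (2 * g)))

variable {g φ}

lemma fFun_lt {k : Fin (2 * g)} (h : k.val < g) :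
    fFun g φ k = (eIso g φ ⟨k.val, h⟩ : Fin (2 * g)) := dif_pos h

lemma fFun_ge {k : Fin (2 * g)} (h : ¬ k.val < g) :
    fFun g φ k = Fin.rev (eIso g φ ⟨k.rev.val, rev_val_lt (le_of_not_gt h)⟩ : Fin (2 * g)) :=
  dif_neg h

lemma fFun_mem {k : Fin (2 * g)} (h : k.val < g) : fFun g φ k ∈ ASet g φ := by
  rw [fFun_lt h]; exact (eIso g φ ⟨k.val, h⟩).2

lemma fFun_not_mem {k : Fin (2 * g)} (h : ¬ k.val < g) : fFun g φ k ∉ ASet g φ := by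
  rw [fFun_ge h]
  exact A_rev (eIso g φ ⟨k.rev.val, rev_val_lt (le_of_not_gt h)⟩).2

lemma fFun_inj : Function.Injective (fFun g φ) := by
  intro a b hab
  by_cases ha : a.val < g <;> by_cases hb : b.val < g
  · rw [fFun_lt ha, fFun_lt hb] at hab
    have := (eIso g φ).injective (Subtype.coe_injective hab)
    have hv := congrArg Fin.val this
    exact Fin.ext hv
  · exact absurd (hab ▸ fFun_mem ha) (fFun_not_mem hb)
  · exact absurd (hab.symm ▸ fFun_mem hb) (fFun_not_mem ha)
  · rw [fFun_ge ha, fFun_ge hb] at hab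
    have h1 := Fin.rev_injective hab
    have h2 := (eIso g φ).injective (Subtype.coe_injective h1)
    have hv := congrArg Fin.val h2
    have h3 : a.rev = b.rev := Fin.ext hv
    exact Fin.rev_injective h3

variable (g φ)

/-- The final element associated to `φ`. -/
noncomputable def wPerm : Equiv.Perm (Fin (2 * g)) :=
  Equiv.ofBijective (fFun g φ) (Finite.injective_iff_bijective.mp fFun_inj)

variable {g φ}

lemma wPerm_apply (k : Fin (2 * g)) : wPerm g φ k = fFun g φ k := rfl

lemma wPerm_rev (k : Fin (2 * g)) : wPerm g φ k.rev = (wPerm g φ k).rev := by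
  rw [wPerm_apply, wPerm_apply]
  by_cases h : k.val < g
  · have hge : ¬ k.rev.val < g := not_lt.2 (rev_val_ge h)
    rw [fFun_ge hge, fFun_lt h]
    simp only [Fin.rev_rev]
  · have hlt : k.rev.val < g := rev_val_lt (le_of_not_gt h)
    rw [fFun_lt hlt, fFun_ge h, Fin.rev_rev]

lemma wPerm_final : ∀ a b : Fin (2 * g), a < b → b.val < g → wPerm g φ a < wPerm g φ b := by
  intro a b hab hb
  have hav : a.val < b.val := hab
  have ha : a.val < g := lt_trans hav hb
  rw [wPerm_apply, wPerm_apply, fFun_lt ha, fFun_lt hb]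
  have : (⟨a.val, ha⟩ : Fin g) < ⟨b.val, hb⟩ := hav
  exact (eIso g φ).strictMono this

end Construction


section Count

variable {g : ℕ} {φ : ℕ → ℤ}

lemma phi_count (hφ : IsElementary g φ) :
    ∀ i ≤ g, φ i + (((Finset.range i).filter (fun j => φ (j + 1) = φ j)).card : ℤ) = i := by
  intro i
  induction i with
  | zero => intro _; simp [hφ.1]
  | succ n ih =>
    intro hn
    have hlt : n < g := hn
    have hrec := ih (le_of_lt hlt)
    rw [Finset.range_add_one, Finset.filter_insert]
    by_cases h : φ (n + 1) = φ n
    · rw [if_pos h, Finset.card_insert_of_notMem (by simp)]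
      push_cast
      push_cast at hrec
      omega
    · rw [if_neg h]
      have hstep := hφ.2.2 n hlt
      push_cast
      push_cast at hrec
      omega

lemma C_wPerm {i : ℕ} (hi : i ≤ g) :
    C g (wPerm g φ) i = ((Finset.range i).filter (fun j => φ (j + 1) = φ j)).card := by
  rw [C]
  have h1 : (((Finset.univ : Finset (Fin (2 * g)))).filter
      (fun a => a.val < g ∧ ((wPerm g φ a).val < i))).card
      = ((ASet g φ).filter (fun x => x.val < i)).card := by
    apply Finset.card_bij (fun a _ => wPerm g φ a)
    · intro a ha
      simp only [Finset.mem_filter, Finset.mem_univ, true_and] at ha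
      rw [Finset.mem_filter]
      exact ⟨by rw [wPerm_apply]; exact fFun_mem ha.1, ha.2⟩
    · intro a _ b _ hab
      exact (wPerm g φ).injective hab
    · intro x hx
      rw [Finset.mem_filter] at hx
      obtain ⟨m, hm⟩ := (eIso g φ).surjective ⟨x, hx.1⟩
      have hmg : (m : ℕ) < g := m.isLt
      have hmval : (m : ℕ) < 2 * g := by omega
      have hw : wPerm g φ ⟨m.val, hmval⟩ = x := by
        rw [wPerm_apply, fFun_lt (show (⟨m.val, hmval⟩ : Fin (2 * g)).val < g from hmg)]
        rw [show (⟨(⟨m.val, hmval⟩ : Fin (2 * g)).val, hmg⟩ : Fin g) = m from Fin.ext rfl, hm]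
      refine ⟨⟨m.val, hmval⟩, ?_, hw⟩
      rw [Finset.mem_filter]
      exact ⟨Finset.mem_univ _, hmg, by rw [hw]; exact hx.2⟩
  have h2 : ((ASet g φ).filter (fun x => x.val < i)).card
      = ((Finset.range i).filter (fun j => φ (j + 1) = φ j)).card := by
    apply Finset.card_bij (fun x _ => x.val)
    · intro x hx
      rw [Finset.mem_filter] at hx
      have hxg : x.val < g := lt_of_lt_of_le hx.2 hi
      rw [Finset.mem_filter, Finset.mem_range]
      exact ⟨hx.2, (memA_lt hxg).1 hx.1⟩
    · intro a _ b _ hab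
      exact Fin.val_injective hab
    · intro j hj
      rw [Finset.mem_filter, Finset.mem_range] at hj
      have hjg : j < g := lt_of_lt_of_le hj.1 hi
      have hj2 : j < 2 * g := by omega
      refine ⟨⟨j, hj2⟩, ?_, rfl⟩
      rw [Finset.mem_filter]
      exact ⟨(memA_lt hjg).2 hj.2, hj.1⟩
  rw [h1, h2]

end Count

section Uniq

variable {g : ℕ}

lemma perm_ext {w w' : Equiv.Perm (Fin (2 * g))}
    (hw : ∀ k : Fin (2 * g), w k.rev = (w k).rev)
    (hw' : ∀ k : Fin (2 * g), w' k.rev = (w' k).rev)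
    (hf : ∀ a b : Fin (2 * g), a < b → b.val < g → w a < w b)
    (hf' : ∀ a b : Fin (2 * g), a < b → b.val < g → w' a < w' b)
    (hC : ∀ i ≤ g, C g w i = C g w' i) : w = w' := by
  have hlt : ∀ j : Fin (2 * g), j.val < g → (j ∈ Aset g w ↔ j ∈ Aset g w') := by
    intro j hj
    rw [mem_Aset_iff_C, mem_Aset_iff_C, hC j.val (le_of_lt hj), hC (j.val + 1) hj]
  have hA : Aset g w = Aset g w' := by
    ext j
    by_cases hj : j.val < g
    · exact hlt j hj
    · rw [← Fin.rev_rev j, mem_Aset_rev hw, mem_Aset_rev hw',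
        hlt j.rev (rev_val_lt (le_of_not_gt hj))]
  have h2g : g ≤ 2 * g := by omega
  have hrange : ∀ v : Equiv.Perm (Fin (2 * g)),
      Set.range (fun m : Fin g => v (Fin.castLE h2g m)) = ↑(Aset g v) := by
    intro v
    ext y
    simp only [Set.mem_range, Finset.mem_coe, mem_Aset]
    constructor
    · rintro ⟨m, rfl⟩
      exact ⟨Fin.castLE h2g m, by simpa using m.isLt, rfl⟩
    · rintro ⟨a, ha1, rfl⟩
      exact ⟨⟨a.val, ha1⟩, by rw [show Fin.castLE h2g ⟨a.val, ha1⟩ = a from Fin.ext rfl]⟩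
  have hum : StrictMono (fun m : Fin g => w (Fin.castLE h2g m)) := by
    intro m m' hmm
    have hcl : Fin.castLE h2g m < Fin.castLE h2g m' := by
      rw [Fin.lt_def]
      exact hmm
    exact hf _ _ hcl (by simpa using m'.isLt)
  have hum' : StrictMono (fun m : Fin g => w' (Fin.castLE h2g m)) := by
    intro m m' hmm
    have hcl : Fin.castLE h2g m < Fin.castLE h2g m' := by
      rw [Fin.lt_def]
      exact hmm
    exact hf' _ _ hcl (by simpa using m'.isLt)
  have hueq : (fun m : Fin g => w (Fin.castLE h2g m)) = (fun m : Fin g => w' (Fin.castLE h2g m)) := by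
    have inst : WellFoundedLT (Fin g) := inferInstance
    have hri := (@StrictMono.range_inj (Fin g) (Fin (2 * g)) _ _ inst _ _ hum hum')
    rw [← hri, hrange w, hrange w', hA]
  apply Equiv.ext
  intro k
  by_cases hk : k.val < g
  · have h := congrFun hueq ⟨k.val, hk⟩
    rwa [show Fin.castLE h2g ⟨k.val, hk⟩ = k from Fin.ext rfl] at h
  · have hkrev : k.rev.val < g := rev_val_lt (le_of_not_gt hk)
    have h1 : w k = (w k.rev).rev := by rw [← hw k.rev, Fin.rev_rev]
    have h2 : w' k = (w' k.rev).rev := by rw [← hw' k.rev, Fin.rev_rev]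
    have h := congrFun hueq ⟨k.rev.val, hkrev⟩
    rw [show Fin.castLE h2g ⟨k.rev.val, hkrev⟩ = k.rev from Fin.ext rfl] at h
    rw [h1, h2, h]

end Uniq

section Main

variable {g : ℕ}

lemma nuSeq_eq (w : Equiv.Perm (Fin (2 * g))) (i : ℕ) :
    nuSeq g w i = (i : ℤ) - (C g w i : ℤ) := rfl

lemma part1 (w : Equiv.Perm (Fin (2 * g))) : IsElementary g (nuSeq g w) := by
  refine ⟨by rw [nuSeq_eq, C_zero]; simp, fun i _ => ?_, fun i hi => ?_⟩
  · rw [nuSeq_eq]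
    have := C_le w i
    omega
  · have hs := C_succ w i
    have ht := T_card_le w i
    rw [nuSeq_eq, nuSeq_eq]
    constructor <;> omega

end Main

end FB

/-- For every final element `w` of `W`, `ν_w` is an elementary sequence, and
`w ↦ ν_w` is a bijection from the final elements of `W` onto the elementary
sequences. -/
theorem final_elements_biject_with_elementary_sequences (g : ℕ) (hg : 0 < g) :
    (∀ w : Equiv.Perm (Fin (2 * g)), InW g w → IsFinal g w →
      IsElementary g (nuSeq g w)) ∧
    (∀ φ : ℕ → ℤ, IsElementary g φ →
      ∃! w : Equiv.Perm (Fin (2 * g)),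
        InW g w ∧ IsFinal g w ∧ ∀ i ≤ g, nuSeq g w i = φ i) := by
  constructor
  · intro w _ _
    exact FB.part1 w
  · intro φ hφ
    have hnu : ∀ i ≤ g, nuSeq g (FB.wPerm g φ) i = φ i := by
      intro i hi
      rw [FB.nuSeq_eq, FB.C_wPerm hi]
      have := FB.phi_count hφ i hi
      omega
    refine ⟨FB.wPerm g φ,
      ⟨fun k => FB.wPerm_rev k, fun a b h1 h2 => FB.wPerm_final a b h1 h2, hnu⟩, ?_⟩
    rintro w' ⟨hw1, hw2, hw3⟩
    apply FB.perm_ext hw1 (fun k => FB.wPerm_rev k) hw2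
      (fun a b h1 h2 => FB.wPerm_final a b h1 h2)
    intro i hi
    have e1 := hw3 i hi
    have e2 := hnu i hi
    rw [FB.nuSeq_eq] at e1 e2
    omega
end
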